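/- arXiv:1803.04262 — 6 statements merged into one kernel-verified Lean document; each statement's English description precedes it below -/
import Mathlib

section
/- Every MVR chain graph is an ancestral graph; that is, if G is a mixed graph containing only directed and bidirected edges and having no partially directed cycle, then for all vertices α and β of G, if α and β are joined by an edge with an arrowhead at α (i.e., α ↔ β or β → α is an edge of G), then α is not anterior to β (equivalently, since G has no undirected edges, α is not an ancestor of β: α ≠ β and there is no directed path from α to β). -/
open scoped Classical

universe u

variable {V : Type u}

/-- A mixed graph: a set of directed edges and a set of bidirected edges on `V`. -/
structure MixedGraph (V : Type u) where
  /-- `dir u v` means there is a directed edge `u → v`. -/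
  dir : V → V → Prop
  /-- `bi u v` means there is a bidirected edge `u ↔ v`. -/
  bi : V → V → Prop

namespace MixedGraph

/-- The basic well-formedness conditions of a mixed graph with only directed and
bidirected edges: `bi` is symmetric and irreflexive, `dir` is irreflexive, there are no
self-loops and at most one edge between each pair of distinct vertices. -/
def IsMixed (G : MixedGraph V) : Prop :=
  (∀ u v, G.bi u v → G.bi v u) ∧
  (∀ v, ¬ G.bi v v) ∧
  (∀ v, ¬ G.dir v v) ∧
  (∀ u v, G.dir u v → ¬ G.bi u v) ∧
  (∀ u v, G.dir u v → ¬ G.dir v u)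

/-- A partially directed cycle: vertices `f 0, f 1, …, f n = f 0` (`n ≥ 2`,
`f 0, …, f (n-1)` distinct) such that every step is a directed edge `f i → f (i+1)` or a
bidirected edge, and at least one step is directed. -/
def HasPDCycle (G : MixedGraph V) : Prop :=
  ∃ (n : ℕ) (f : ℕ → V), 2 ≤ n ∧ f n = f 0 ∧
    (∀ i j, i < n → j < n → f i = f j → i = j) ∧
    (∀ i, i < n → G.dir (f i) (f (i + 1)) ∨ G.bi (f i) (f (i + 1))) ∧
    (∃ i, i < n ∧ G.dir (f i) (f (i + 1)))

/-- An MVR chain graph: a mixed graph containing only directed and bidirected edges and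
having no partially directed cycle. -/
def IsMVR (G : MixedGraph V) : Prop := G.IsMixed ∧ ¬ G.HasPDCycle

/-- `G.anc u v` : `u` is an ancestor of `v` (`u = v` or there is a directed path
`u → ⋯ → v`). -/
def anc (G : MixedGraph V) (u v : V) : Prop := Relation.ReflTransGen G.dir u v

/-- `an(S)`: the set of ancestors of members of `S`. -/
def ancSet (G : MixedGraph V) (S : Set V) : Set V := {u | ∃ s ∈ S, G.anc u s}

/-- The descendants of `v`. -/
def de (G : MixedGraph V) (v : V) : Set V := {u | G.anc v u}

/-- The non-descendants of `v` : `V \ (de(v) ∪ {v})`. -/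
def nd (G : MixedGraph V) (v : V) : Set V := {u | ¬ G.anc v u}

/-- Adjacency: some edge joins `u` and `v`. -/
def adj (G : MixedGraph V) (u v : V) : Prop := G.dir u v ∨ G.dir v u ∨ G.bi u v

/-- `f 0, …, f n` is a walk: consecutive vertices are joined by some edge. -/
def IsWalk (G : MixedGraph V) (n : ℕ) (f : ℕ → V) : Prop :=
  ∀ i, i < n → G.adj (f i) (f (i + 1))

/-- `f 0, …, f n` is a path: a walk with distinct vertices. -/
def IsPath (G : MixedGraph V) (n : ℕ) (f : ℕ → V) : Prop :=
  G.IsWalk n f ∧ ∀ i j, i ≤ n → j ≤ n → f i = f j → i = j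

/-- The nonendpoint vertex `f i` (`0 < i < n`) of a path is a collider: both incident
edges of the path have an arrowhead at `f i`, i.e. the edge from `f (i-1)` is
`f (i-1) → f i` or `f (i-1) ↔ f i`, and the edge to `f (i+1)` is `f i ← f (i+1)` or
`f i ↔ f (i+1)`. -/
def IsColliderAt (G : MixedGraph V) (f : ℕ → V) (i : ℕ) : Prop :=
  (G.dir (f (i - 1)) (f i) ∨ G.bi (f (i - 1)) (f i)) ∧
  (G.dir (f (i + 1)) (f i) ∨ G.bi (f i) (f (i + 1)))

/-- A path between `α` and `β` is m-connecting given `Z` if every noncollider on it is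
not in `Z` and every collider on it is in `an(Z)`. -/
def MConnecting (G : MixedGraph V) (Z : Set V) (α β : V) : Prop :=
  ∃ (n : ℕ) (f : ℕ → V), G.IsPath n f ∧ f 0 = α ∧ f n = β ∧
    ∀ i, 0 < i → i < n →
      (G.IsColliderAt f i → f i ∈ G.ancSet Z) ∧ (¬ G.IsColliderAt f i → f i ∉ Z)

/-- `X` and `Y` are m-separated given `Z`: no m-connecting path given `Z` joins a vertex
of `X` to a vertex of `Y`. -/
def MSep (G : MixedGraph V) (X Y Z : Set V) : Prop :=
  ∀ α ∈ X, ∀ β ∈ Y, ¬ G.MConnecting Z α β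

/-- The induced subgraph of `G` on the vertex set `A` (kept on the same vertex type:
only edges with both endpoints in `A` remain). -/
def induce (G : MixedGraph V) (A : Set V) : MixedGraph V where
  dir u v := u ∈ A ∧ v ∈ A ∧ G.dir u v
  bi u v := u ∈ A ∧ v ∈ A ∧ G.bi u v

/-- Two vertices are collider connected if joined by a path on which every nonendpoint
vertex is a collider (a single edge counts). -/
def ColliderConnected (G : MixedGraph V) (x y : V) : Prop :=
  ∃ (n : ℕ) (f : ℕ → V), 1 ≤ n ∧ G.IsPath n f ∧ f 0 = x ∧ f n = y ∧
    ∀ i, 0 < i → i < n → G.IsColliderAt f i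

end MixedGraph

/-- `Z` separates `X` from `Y` in the undirected graph with adjacency `E` : every path
from `X` to `Y` meets `Z`. -/
def UndirSep {V : Type u} (E : V → V → Prop) (X Y Z : Set V) : Prop :=
  ∀ (n : ℕ) (f : ℕ → V), (∀ i, i < n → E (f i) (f (i + 1))) →
    (∀ i j, i ≤ n → j ≤ n → f i = f j → i = j) →
    f 0 ∈ X → f n ∈ Y → ∃ i, i ≤ n ∧ f i ∈ Z

namespace MixedGraph

/-- Augmented-graph separation (m*-separation): `Z` separates `X` from `Y` in the
augmented graph (whose edges join the collider-connected pairs) of the induced subgraph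
of `G` on `an(X ∪ Y ∪ Z)`. -/
def AugSep (G : MixedGraph V) (X Y Z : Set V) : Prop :=
  UndirSep (fun a b => (G.induce (G.ancSet (X ∪ Y ∪ Z))).ColliderConnected a b) X Y Z

/-- Connectivity in the bidirected part of `G`. -/
def biConn (G : MixedGraph V) (u v : V) : Prop := Relation.ReflTransGen G.bi u v

/-- The chain component of `v`: the connected component of `v` in the bidirected part. -/
def chainComp (G : MixedGraph V) (v : V) : Set V := {u | G.biConn v u}

/-- `T` is a chain component of `G`. -/
def IsChainComp (G : MixedGraph V) (T : Set V) : Prop := ∃ v, T = G.chainComp v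

/-- The parents of a vertex: `pa_G(v) = {w : w → v}`. -/
def pa (G : MixedGraph V) (v : V) : Set V := {w | G.dir w v}

/-- The boundary of a vertex: parents and bidirected neighbours. -/
def bd (G : MixedGraph V) (v : V) : Set V := {w | G.dir w v ∨ G.bi w v}

/-- The parents of a set: `pa_G(A) = {w ∉ A : w → v for some v ∈ A}`. -/
def paSet (G : MixedGraph V) (A : Set V) : Set V := {w | w ∉ A ∧ ∃ v ∈ A, G.dir w v}

/-- `Nb_G(A)`: `A` together with all vertices joined to `A` by a bidirected edge. -/
def Nb (G : MixedGraph V) (A : Set V) : Set V := A ∪ {w | ∃ v ∈ A, G.bi w v}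

/-- The edge relation of the directed graph `D` of chain components:
`C₁ → C₂` iff they are distinct chain components and some directed edge of `G` joins a
vertex of `C₁` to a vertex of `C₂`. -/
def compRel (G : MixedGraph V) (C₁ C₂ : Set V) : Prop :=
  G.IsChainComp C₁ ∧ G.IsChainComp C₂ ∧ C₁ ≠ C₂ ∧ ∃ u ∈ C₁, ∃ v ∈ C₂, G.dir u v

/-- `pa_D(T)`: the union of the chain components that are parents of `T` in the directed
graph `D` of chain components. -/
def paD (G : MixedGraph V) (T : Set V) : Set V := {w | G.compRel (G.chainComp w) T}

/-- `nd_D(T)`: the union of the chain components `T'` such that there is no directed path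
from `T` to `T'` in the directed graph `D` of chain components. -/
def ndD (G : MixedGraph V) (T : Set V) : Set V :=
  {w | ¬ Relation.ReflTransGen G.compRel T (G.chainComp w)}

/-- Connectivity in the bidirected part of the induced subgraph on `A`. -/
def biConnIn (G : MixedGraph V) (A : Set V) (u v : V) : Prop :=
  Relation.ReflTransGen (fun a b => a ∈ A ∧ b ∈ A ∧ G.bi a b) u v

/-- `A` is connected: the bidirected part of the induced subgraph on `A` is connected
(and `A` is nonempty). -/
def ConnectedIn (G : MixedGraph V) (A : Set V) : Prop :=
  A.Nonempty ∧ ∀ u ∈ A, ∀ v ∈ A, G.biConnIn A u v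

/-- `dis_{G_A}(x)`: the connected component (district) of `x` in the bidirected part of
the induced subgraph `G_A`. -/
def disIn (G : MixedGraph V) (A : Set V) (x : V) : Set V := {y | G.biConnIn A x y}

/-- The Markov blanket `mb(x, A) = pa_G(dis_{G_A}(x)) ∪ (dis_{G_A}(x) \ {x})`. -/
def mb (G : MixedGraph V) (x : V) (A : Set V) : Set V :=
  G.paSet (G.disIn A x) ∪ (G.disIn A x \ {x})

/-- `pre(T)` relative to an order `r` on chain components: the union of all chain
components strictly preceding `T`. -/
def pre (G : MixedGraph V) (r : Set V → Set V → Prop) (T : Set V) : Set V :=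
  {v | r (G.chainComp v) T}

/-- `r` is a strict total order on the chain components of `G` that is consistent with
the directed graph `D` of chain components, i.e. `pa_D(T) ⊆ pre(T)` for all `T`. -/
def ConsistentCompOrder (G : MixedGraph V) (r : Set V → Set V → Prop) : Prop :=
  (∀ C, ¬ r C C) ∧
  (∀ C₁ C₂ C₃, r C₁ C₂ → r C₂ C₃ → r C₁ C₃) ∧
  (∀ C₁ C₂, G.IsChainComp C₁ → G.IsChainComp C₂ → C₁ = C₂ ∨ r C₁ C₂ ∨ r C₂ C₁) ∧
  (∀ T, G.IsChainComp T → G.paD T ⊆ G.pre r T)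

/-- A total order `r` on the vertices of `G` is consistent with `G` if `r x y` implies
that `y` is not an ancestor of `x`. -/
def ConsistentVertexOrder (G : MixedGraph V) (r : V → V → Prop) : Prop :=
  IsStrictTotalOrder V r ∧ ∀ x y, r x y → ¬ G.anc y x

end MixedGraph

section IndepModel

variable {V : Type u} (I : Set V → Set V → Set V → Prop)

/-- Symmetry: `X ⫫ Y | Z  ⇒  Y ⫫ X | Z`. -/
def IndepSymm : Prop := ∀ X Y Z : Set V, I X Y Z → I Y X Z

/-- Decomposition: `X ⫫ Y ∪ W | Z  ⇒  X ⫫ Y | Z`. -/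
def IndepDecomp : Prop := ∀ X Y W Z : Set V, I X (Y ∪ W) Z → I X Y Z

/-- Weak union: `X ⫫ Y ∪ W | Z  ⇒  X ⫫ Y | Z ∪ W`. -/
def IndepWeakUnion : Prop := ∀ X Y W Z : Set V, I X (Y ∪ W) Z → I X Y (Z ∪ W)

/-- Contraction: `X ⫫ Y | Z ∪ W` and `X ⫫ W | Z` imply `X ⫫ Y ∪ W | Z`. -/
def IndepContraction : Prop := ∀ X Y W Z : Set V, I X Y (Z ∪ W) → I X W Z → I X (Y ∪ W) Z

/-- Composition: `X ⫫ Y | Z` and `X ⫫ W | Z` imply `X ⫫ Y ∪ W | Z`. -/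
def IndepComposition : Prop := ∀ X Y W Z : Set V, I X Y Z → I X W Z → I X (Y ∪ W) Z

/-- A semi-graphoid satisfies symmetry, decomposition, weak union and contraction. -/
def SemiGraphoid : Prop := IndepSymm I ∧ IndepDecomp I ∧ IndepWeakUnion I ∧ IndepContraction I

/-- A compositional semi-graphoid additionally satisfies composition. -/
def CompositionalSemiGraphoid : Prop := SemiGraphoid I ∧ IndepComposition I

variable (G : MixedGraph V)

/-- The global Markov property via m-separation: whenever `X` and `Y` are m-separated
given `Z` in `G` (for pairwise disjoint `X, Y, Z` with `X, Y` nonempty), `⟨X, Y | Z⟩ ∈ ℐ`. -/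
def GlobalMarkovM : Prop :=
  ∀ X Y Z : Set V, X.Nonempty → Y.Nonempty →
    Disjoint X Y → Disjoint X Z → Disjoint Y Z → G.MSep X Y Z → I X Y Z

/-- The global Markov property via augmented-graph separation: whenever `Z` separates `X`
from `Y` in the augmented graph of the induced subgraph of `G` on `an(X ∪ Y ∪ Z)` (for
pairwise disjoint `X, Y, Z` with `X, Y` nonempty), `⟨X, Y | Z⟩ ∈ ℐ`. -/
def GlobalMarkovAug : Prop :=
  ∀ X Y Z : Set V, X.Nonempty → Y.Nonempty →
    Disjoint X Y → Disjoint X Z → Disjoint Y Z → G.AugSep X Y Z → I X Y Z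

/-- The block-recursive Markov property of type IV. -/
def TypeIVMarkov : Prop :=
  ∀ T : Set V, G.IsChainComp T →
    (I T (G.ndD T \ G.paD T) (G.paD T)) ∧
    (∀ A : Set V, A ⊆ T → I A (G.paD T \ G.paSet A) (G.paSet A)) ∧
    (∀ A : Set V, A ⊆ T → G.ConnectedIn A → I A (T \ G.Nb A) (G.paD T))

/-- The multivariate regression (MR) Markov property with respect to the order `r` on the
chain components: (MR1) for connected `A ⊆ T`, `A ⫫ pre(T) \ pa_G(A) | pa_G(A)`; (MR2)
distinct connected components `A₁, A₂` of `A ⊆ T` satisfy `A₁ ⫫ A₂ | pre(T)`. -/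
def MRMarkov (r : Set V → Set V → Prop) : Prop :=
  ∀ T : Set V, G.IsChainComp T → ∀ A : Set V, A ⊆ T →
    (G.ConnectedIn A → I A (G.pre r T \ G.paSet A) (G.paSet A)) ∧
    (∀ x ∈ A, ∀ y ∈ A, G.disIn A x ≠ G.disIn A y →
      I (G.disIn A x) (G.disIn A y) (G.pre r T))

/-- The ordered local Markov property with respect to a total vertex order `r` : for every
vertex `x` and every ancestrally closed `A` with `x ∈ A ⊆ pre_{G,≺}(x)`,
`{x} ⫫ A \ (mb(x,A) ∪ {x}) | mb(x,A)`. -/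
def OrderedLocalMarkov (r : V → V → Prop) : Prop :=
  ∀ (x : V) (A : Set V), G.ancSet A = A → x ∈ A → A ⊆ {v | r v x ∨ v = x} →
    I {x} (A \ (G.mb x A ∪ {x})) (G.mb x A)

/-- The alternative local Markov property: for every vertex `v`,
`{v} ⫫ nd(v) \ bd(v) | pa_G(v)`. -/
def AltLocalMarkov : Prop :=
  ∀ v : V, I {v} (G.nd v \ G.bd v) (G.pa v)

end IndepModel

/-! A directed path `α → ⋯ → β` can be shortened until its vertices are distinct; together
with the edge `β → α` or `β ↔ α` it then closes up into a partially directed cycle. -/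

namespace Relation

variable {α : Type*} (r : α → α → Prop)

def IsChainSeq (n : ℕ) (f : ℕ → α) : Prop := ∀ i < n, r (f i) (f (i + 1))

variable {r}

theorem ReflTransGen.exists_isChainSeq {a b : α} (h : ReflTransGen r a b) :
    ∃ n f, f 0 = a ∧ f n = b ∧ IsChainSeq r n f := by
  induction h with
  | refl => exact ⟨0, fun _ => a, rfl, rfl, fun _ h => absurd h (Nat.not_lt_zero _)⟩
  | @tail b c _ hbc ih =>
    obtain ⟨n, f, hf0, hfn, hf⟩ := ih
    refine ⟨n + 1, fun i => if i ≤ n then f i else c, by simpa using hf0, by simp, ?_⟩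
    intro i hi
    rcases Nat.lt_or_eq_of_le (Nat.lt_succ_iff.mp hi) with hi | rfl
    · simpa [hi.le, Nat.succ_le_of_lt hi] using hf i hi
    · simpa [hfn] using hbc

/-- Cut out the loop `f i → ⋯ → f j`. -/
theorem IsChainSeq.exists_shortcut {n i j : ℕ} {f : ℕ → α} (hf : IsChainSeq r n f)
    (hij : i < j) (hjn : j ≤ n) (heq : f i = f j) :
    ∃ g, g 0 = f 0 ∧ g (n - (j - i)) = f n ∧ IsChainSeq r (n - (j - i)) g := by
  refine ⟨fun k => if k ≤ i then f k else f (k + (j - i)), by simp, ?_, ?_⟩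
  · by_cases hn : n - (j - i) ≤ i
    · have hi : n - (j - i) = i := by omega
      have hj : j = n := by omega
      dsimp only
      rw [hi, if_pos le_rfl, heq, hj]
    · simp only [hn, if_false]
      congr 1
      omega
  · intro k hk
    rcases lt_trichotomy k i with hki | rfl | hki
    · simpa [hki.le, Nat.succ_le_of_lt hki] using hf k (by omega)
    · have hstep := hf j (by omega)
      simp only [le_refl, if_true, Nat.not_succ_le_self, if_false]
      rw [heq, show k + 1 + (j - k) = j + 1 by omega]
      exact hstep
    · have hstep := hf (k + (j - i)) (by omega)
      simp only [Nat.not_le.mpr hki, Nat.not_le.mpr (Nat.lt_succ_of_lt hki), if_false]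
      rwa [show k + 1 + (j - i) = k + (j - i) + 1 by omega]

/-- A shortest chain from `a` to `b` has no repeated vertex. -/
theorem ReflTransGen.exists_isChainSeq_injOn {a b : α} (h : ReflTransGen r a b) :
    ∃ n f, f 0 = a ∧ f n = b ∧ IsChainSeq r n f ∧ Set.InjOn f (Set.Iic n) := by
  let P : ℕ → Prop := fun n => ∃ f : ℕ → α, f 0 = a ∧ f n = b ∧ IsChainSeq r n f
  have hP : ∃ n, P n := h.exists_isChainSeq
  obtain ⟨f, hf0, hfn, hf⟩ := Nat.find_spec hP
  refine ⟨Nat.find hP, f, hf0, hfn, hf, ?_⟩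
  have hdistinct : ∀ i j, i < j → j ≤ Nat.find hP → f i ≠ f j := by
    intro i j hij hjn heq
    obtain ⟨g, hg0, hgn, hg⟩ := hf.exists_shortcut hij hjn heq
    exact Nat.find_min hP (by omega : Nat.find hP - (j - i) < Nat.find hP)
      ⟨g, hg0.trans hf0, hgn.trans hfn, hg⟩
  intro i hi j hj heq
  rcases lt_trichotomy i j with hij | hij | hij
  · exact absurd heq (hdistinct i j hij hj)
  · exact hij
  · exact absurd heq.symm (hdistinct j i hij hi)

end Relation

namespace MixedGraph

theorem hasPDCycle_of_isChainSeq_dir {G : MixedGraph V} {n : ℕ} {f : ℕ → V} (hn : 0 < n)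
    (hf : Relation.IsChainSeq G.dir n f) (hinj : Set.InjOn f (Set.Iic n))
    (hclose : G.dir (f n) (f 0) ∨ G.bi (f n) (f 0)) : G.HasPDCycle := by
  let g : ℕ → V := fun i => if i ≤ n then f i else f 0
  have hg : ∀ i ≤ n, g i = f i := fun i hi => if_pos hi
  refine ⟨n + 1, g, by omega, by simp [g], ?_, ?_, ⟨0, by omega, ?_⟩⟩
  · intro i j hi hj hij
    rw [hg i (by omega), hg j (by omega)] at hij
    exact hinj (Set.mem_Iic.mpr (by omega)) (Set.mem_Iic.mpr (by omega)) hij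
  · intro i hi
    rcases Nat.lt_or_eq_of_le (Nat.lt_succ_iff.mp hi) with hi | rfl
    · rw [hg i hi.le, hg (i + 1) hi]
      exact Or.inl (hf i hi)
    · simpa [g] using hclose
  · rw [hg 0 (Nat.zero_le n), hg 1 hn]
    exact hf 0 hn

end MixedGraph

/-- Every MVR chain graph is an ancestral graph: if `α` and `β` are
joined by an edge with an arrowhead at `α` (i.e. `α ↔ β` or `β → α` is an edge of `G`),
then `α` is not an ancestor of `β`. -/
theorem mvr_is_ancestral {V : Type u} (G : MixedGraph V) (hG : G.IsMVR) (α β : V)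
    (h : G.bi α β ∨ G.dir β α) : ¬ G.anc α β := by
  obtain ⟨⟨hbi_symm, hbi_irrefl, hdir_irrefl, -, -⟩, hno_cycle⟩ := hG
  intro hanc
  obtain ⟨n, f, hf0, hfn, hf, hinj⟩ := Relation.ReflTransGen.exists_isChainSeq_injOn hanc
  have hn : 0 < n := by
    refine Nat.pos_of_ne_zero fun hn => ?_
    subst hn
    rw [hf0] at hfn
    subst hfn
    exact h.elim (hbi_irrefl α) (hdir_irrefl α)
  refine hno_cycle (MixedGraph.hasPDCycle_of_isChainSeq_dir hn hf hinj ?_)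
  rw [hf0, hfn]
  exact h.symm.imp_right (hbi_symm α β)
end

section
/- Every MVR chain graph has the same independence model as a DAG under marginalization: for every MVR chain graph G on a finite vertex set V there exist a finite set L disjoint from V and a directed acyclic graph D on vertex set V ∪ L such that for all pairwise disjoint subsets X, Y, Z of V with X and Y nonempty, X and Y are m-separated given Z in G if and only if X and Y are d-separated given Z in D. -/
open scoped Classical

universe u

variable {V : Type u}

/-!
Replace every bidirected edge `a ↔ b` of `G` by a latent common parent `a ← (a, b) → b`.
An m-connecting path of `G` lifts to one of this DAG by routing each bidirected step through
its latent vertex, and an m-connecting path of the DAG between observed vertices contracts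
back: a latent vertex on a path is a noncollider with observed neighbours, and an observed
vertex is a collider in the DAG exactly when it is one in `G`, since `(a, b) → b` has an
arrowhead at `b` just like `a ↔ b`. A directed cycle of the DAG stays among observed vertices,
so it would be a partially directed cycle of `G`.
-/

section Cycle

variable {α : Type*} {r : α → α → Prop}

lemma exists_walk_of_transGen {a b : α} (h : Relation.TransGen r a b) :
    ∃ n, ∃ f : ℕ → α, 1 ≤ n ∧ f 0 = a ∧ f n = b ∧ ∀ i < n, r (f i) (f (i + 1)) := by
  induction h using Relation.TransGen.head_induction_on with
  | @single c hab => exact ⟨1, fun i => if i = 0 then c else b, le_rfl, rfl, rfl, by simpa⟩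
  | @head a c hac _ ih =>
    obtain ⟨n, f, -, hf0, hfn, hf⟩ := ih
    refine ⟨n + 1, fun i => Nat.casesOn i a f, by omega, rfl, hfn, ?_⟩
    rintro (_ | i) hi
    · rwa [← hf0] at hac
    · exact hf i (by omega)

lemma exists_walk_shortcut {n i j : ℕ} {f : ℕ → α} (hf : ∀ k < n, r (f k) (f (k + 1)))
    (hij : i < j) (hjn : j ≤ n) (hfij : f i = f j) :
    ∃ g : ℕ → α, g 0 = f 0 ∧ g (n - (j - i)) = f n ∧ ∀ k < n - (j - i), r (g k) (g (k + 1)) := by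
  refine ⟨fun k => if k ≤ i then f k else f (k + (j - i)), by simp, ?_, fun k hk => ?_⟩
  · by_cases hi : n - (j - i) ≤ i
    · have : n - (j - i) = i := by omega
      simp only [hi, if_true]
      rw [this, hfij, show j = n by omega]
    · simp only [hi, if_false]
      rw [show n - (j - i) + (j - i) = n by omega]
  · rcases lt_trichotomy k i with hki | rfl | hki
    · simpa [hki.le, Nat.succ_le_of_lt hki] using hf k (by omega)
    · simpa [hfij, show k + 1 + (j - k) = j + 1 by omega] using hf j (by omega)
    · simpa [show ¬ k ≤ i by omega, show ¬ k + 1 ≤ i by omega,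
        show k + 1 + (j - i) = k + (j - i) + 1 by omega] using hf (k + (j - i)) (by omega)

/-- A shortest closed walk has no repeated vertex. -/
lemma exists_cycle_of_transGen (hirr : ∀ a, ¬ r a a) {a : α} (h : Relation.TransGen r a a) :
    ∃ n, ∃ f : ℕ → α, 2 ≤ n ∧ f n = f 0 ∧ (∀ i j, i < n → j < n → f i = f j → i = j) ∧
      ∀ i < n, r (f i) (f (i + 1)) := by
  have hex : ∃ n, 1 ≤ n ∧ ∃ f : ℕ → α, f n = f 0 ∧ ∀ i < n, r (f i) (f (i + 1)) := by
    obtain ⟨n, f, hn, hf0, hfn, hf⟩ := exists_walk_of_transGen h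
    exact ⟨n, hn, f, hfn.trans hf0.symm, hf⟩
  obtain ⟨hn, f, hfn, hf⟩ := Nat.find_spec hex
  refine ⟨Nat.find hex, f, ?_, hfn, fun i j hi hj hfij => ?_, hf⟩
  · by_contra! hlt
    have h1 : Nat.find hex = 1 := by omega
    have := hf 0 (by omega)
    rw [zero_add, ← h1, hfn] at this
    exact hirr _ this
  · by_contra hne
    wlog hij : i < j generalizing i j
    · exact this j i hj hi hfij.symm (Ne.symm hne) (by omega)
    obtain ⟨g, hg0, hgn, hg⟩ := exists_walk_shortcut hf hij hj.le hfij
    exact Nat.find_min hex (m := Nat.find hex - (j - i)) (by omega)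
      ⟨by omega, g, by rw [hgn, hfn, hg0], hg⟩

end Cycle

lemma exists_eq_or_add_one_eq {q : ℕ → ℕ} (h0 : q 0 = 0)
    (hq : ∀ j, q (j + 1) = q j + 1 ∨ q (j + 1) = q j + 2) (k : ℕ) :
    ∃ j, q j = k ∨ (q j + 1 = k ∧ q (j + 1) = q j + 2) := by
  induction k with
  | zero => exact ⟨0, .inl h0⟩
  | succ k ih =>
    obtain ⟨j, rfl | ⟨rfl, hj⟩⟩ := ih
    · rcases hq j with hj | hj
      exacts [⟨j + 1, .inl hj⟩, ⟨j, .inr ⟨rfl, hj⟩⟩]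
    · exact ⟨j + 1, .inl hj⟩

namespace MixedGraph

lemma IsMixed.not_bi_of_dir {G : MixedGraph V} (hM : G.IsMixed) {a b : V}
    (h : G.dir a b ∨ G.dir b a) : ¬ G.bi a b := by
  rcases h with h | h
  exacts [hM.2.2.2.1 a b h, fun hab => hM.2.2.2.1 b a h (hM.1 a b hab)]

/-- `MConnecting` asks, by definition, for `IsActiveAt` at every inner vertex of the path. -/
def IsActiveAt (G : MixedGraph V) (Z : Set V) (f : ℕ → V) (i : ℕ) : Prop :=
  (G.IsColliderAt f i → f i ∈ G.ancSet Z) ∧ (¬ G.IsColliderAt f i → f i ∉ Z)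

def latentDag (G : MixedGraph V) : MixedGraph (V ⊕ V × V) where
  dir x y := match x, y with
    | .inl u, .inl v => G.dir u v
    | .inr p, .inl w => G.bi p.1 p.2 ∧ (w = p.1 ∨ w = p.2)
    | _, .inr _ => False
  bi _ _ := False

section LatentDag

variable {G : MixedGraph V}

@[simp]
lemma latentDag_dir_inl_inl {u v : V} : G.latentDag.dir (.inl u) (.inl v) ↔ G.dir u v :=
  Iff.rfl

@[simp]
lemma latentDag_dir_inr_inl {p : V × V} {w : V} :
    G.latentDag.dir (.inr p) (.inl w) ↔ G.bi p.1 p.2 ∧ (w = p.1 ∨ w = p.2) :=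
  Iff.rfl

@[simp]
lemma not_latentDag_dir_inr {x : V ⊕ V × V} {p : V × V} : ¬ G.latentDag.dir x (.inr p) := by
  cases x <;> exact id

@[simp]
lemma not_latentDag_bi {x y : V ⊕ V × V} : ¬ G.latentDag.bi x y :=
  id

lemma exists_eq_inl_of_latentDag_dir_inr {p : V × V} {x : V ⊕ V × V}
    (h : G.latentDag.dir (.inr p) x) : ∃ w, x = .inl w := by
  cases x with
  | inl w => exact ⟨w, rfl⟩
  | inr _ => exact absurd h not_latentDag_dir_inr

lemma latentDag_dir_of_adj_inr {p : V × V} {x : V ⊕ V × V}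
    (h : G.latentDag.adj (.inr p) x ∨ G.latentDag.adj x (.inr p)) :
    G.latentDag.dir (.inr p) x := by
  simpa [adj] using h

lemma bi_of_latentDag_dir (hM : G.IsMixed) {p : V × V} {a b : V}
    (ha : G.latentDag.dir (.inr p) (.inl a)) (hb : G.latentDag.dir (.inr p) (.inl b))
    (hab : a ≠ b) : G.bi a b := by
  obtain ⟨hp, rfl | rfl⟩ := ha <;> obtain ⟨-, rfl | rfl⟩ := hb
  exacts [absurd rfl hab, hp, hM.1 _ _ hp, absurd rfl hab]

lemma latentDag_isColliderAt_iff {g : ℕ → V ⊕ V × V} {k : ℕ} :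
    G.latentDag.IsColliderAt g k ↔
      G.latentDag.dir (g (k - 1)) (g k) ∧ G.latentDag.dir (g (k + 1)) (g k) := by
  simp [IsColliderAt]

lemma latentDag_isActiveAt_of_eq_inr {Z : Set V} {g : ℕ → V ⊕ V × V} {k : ℕ} {p : V × V}
    (hk : g k = .inr p) : G.latentDag.IsActiveAt (.inl '' Z) g k := by
  simp [IsActiveAt, latentDag_isColliderAt_iff, hk]

lemma latentDag_anc_inl {u : V} {y : V ⊕ V × V} (h : G.latentDag.anc (.inl u) y) :
    ∃ z, y = .inl z ∧ G.anc u z := by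
  induction h with
  | refl => exact ⟨u, rfl, .refl⟩
  | tail _ hyz ih =>
    obtain ⟨z, rfl, hz⟩ := ih
    cases ‹V ⊕ V × V› with
    | inl w => exact ⟨w, rfl, hz.tail hyz⟩
    | inr _ => exact absurd hyz not_latentDag_dir_inr

lemma inl_mem_latentDag_ancSet_iff {Z : Set V} {w : V} :
    .inl w ∈ G.latentDag.ancSet (.inl '' Z) ↔ w ∈ G.ancSet Z := by
  constructor
  · rintro ⟨_, ⟨z, hz, rfl⟩, h⟩
    obtain ⟨_, hz', h⟩ := latentDag_anc_inl h
    cases hz'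
    exact ⟨z, hz, h⟩
  · rintro ⟨z, hz, h⟩
    exact ⟨.inl z, ⟨z, hz, rfl⟩,
      Relation.ReflTransGen.lift (p := G.latentDag.dir) Sum.inl (fun _ _ => id) _ _ h⟩

lemma latentDag_acyclic (hG : G.IsMVR) (x : V ⊕ V × V) :
    ¬ Relation.TransGen G.latentDag.dir x x := by
  intro h
  cases x with
  | inr _ => cases h <;> exact not_latentDag_dir_inr ‹_›
  | inl u =>
    obtain ⟨_, hux, hxu⟩ := Relation.TransGen.tail'_iff.1 h
    obtain ⟨v, rfl, huv⟩ := latentDag_anc_inl hux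
    obtain ⟨n, f, hn, hfn, hinj, hf⟩ :=
      exists_cycle_of_transGen hG.1.2.2.1 (Relation.TransGen.tail' huv hxu)
    exact hG.2 ⟨n, f, hn, hfn, hinj, fun i hi => .inl (hf i hi), 0, by omega, hf 0 (by omega)⟩

end LatentDag

/-- `g` is the path `f` of `G` (of length `n`) with a latent vertex of `G.latentDag` inserted
into each bidirected step; `f j` sits at position `q j` of `g`. -/
structure IsLatentExpansion (G : MixedGraph V) (n : ℕ) (f : ℕ → V) (g : ℕ → V ⊕ V × V)
    (q : ℕ → ℕ) : Prop where
  strictMono : StrictMono q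
  zero : q 0 = 0
  apply_eq : ∀ j ≤ n, g (q j) = .inl (f j)
  step : ∀ j < n,
    (q (j + 1) = q j + 1 ∧ (G.dir (f j) (f (j + 1)) ∨ G.dir (f (j + 1)) (f j))) ∨
    (q (j + 1) = q j + 2 ∧ G.bi (f j) (f (j + 1)) ∧ ∃ p, g (q j + 1) = .inr p ∧
      G.latentDag.dir (.inr p) (.inl (f j)) ∧ G.latentDag.dir (.inr p) (.inl (f (j + 1))))

namespace IsLatentExpansion

variable {G : MixedGraph V} {n : ℕ} {f : ℕ → V} {g : ℕ → V ⊕ V × V} {q : ℕ → ℕ}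

lemma latentDag_dir_into_succ_iff (hM : G.IsMixed) (e : G.IsLatentExpansion n f g q) {j : ℕ}
    (hj : j < n) :
    G.latentDag.dir (g (q (j + 1) - 1)) (g (q (j + 1))) ↔
      G.dir (f j) (f (j + 1)) ∨ G.bi (f j) (f (j + 1)) := by
  rw [e.apply_eq (j + 1) hj]
  rcases e.step j hj with ⟨hq, hd⟩ | ⟨hq, hb, p, hp, -, hp'⟩
  · rw [hq, Nat.add_sub_cancel, e.apply_eq j hj.le, latentDag_dir_inl_inl,
      or_iff_left (hM.not_bi_of_dir hd)]
  · rw [hq, show q j + 2 - 1 = q j + 1 by omega, hp]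
    exact iff_of_true hp' (.inr hb)

lemma latentDag_dir_into_iff (hM : G.IsMixed) (e : G.IsLatentExpansion n f g q) {j : ℕ}
    (hj : j < n) :
    G.latentDag.dir (g (q j + 1)) (g (q j)) ↔
      G.dir (f (j + 1)) (f j) ∨ G.bi (f j) (f (j + 1)) := by
  rw [e.apply_eq j hj.le]
  rcases e.step j hj with ⟨hq, hd⟩ | ⟨-, hb, p, hp, hp', -⟩
  · rw [← hq, e.apply_eq (j + 1) hj, latentDag_dir_inl_inl,
      or_iff_left (hM.not_bi_of_dir hd)]
  · rw [hp]
    exact iff_of_true hp' (.inr hb)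

lemma isColliderAt_iff (hM : G.IsMixed) (e : G.IsLatentExpansion n f g q) {j : ℕ}
    (hj0 : 0 < j) (hjn : j < n) :
    G.latentDag.IsColliderAt g (q j) ↔ G.IsColliderAt f j := by
  obtain ⟨i, rfl⟩ : ∃ i, j = i + 1 := ⟨j - 1, by omega⟩
  rw [latentDag_isColliderAt_iff, e.latentDag_dir_into_succ_iff hM (by omega),
    e.latentDag_dir_into_iff hM hjn]
  rfl

lemma isActiveAt_iff (hM : G.IsMixed) (e : G.IsLatentExpansion n f g q) {Z : Set V} {j : ℕ}
    (hj0 : 0 < j) (hjn : j < n) :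
    G.latentDag.IsActiveAt (.inl '' Z) g (q j) ↔ G.IsActiveAt Z f j := by
  simp only [IsActiveAt, e.isColliderAt_iff hM hj0 hjn, e.apply_eq j hjn.le,
    inl_mem_latentDag_ancSet_iff, Sum.inl_injective.mem_set_image]

lemma isPath (e : G.IsLatentExpansion n f g q) (hg : G.latentDag.IsPath (q n) g) :
    G.IsPath n f := by
  refine ⟨fun j hj => ?_, fun i j hi hj hij => ?_⟩
  · rcases e.step j hj with ⟨-, hd | hd⟩ | ⟨-, hb, -⟩
    exacts [.inl hd, .inr (.inl hd), .inr (.inr hb)]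
  · have hq := e.strictMono.monotone
    refine e.strictMono.injective (hg.2 _ _ (hq hi) (hq hj) ?_)
    rw [e.apply_eq i hi, e.apply_eq j hj, hij]

end IsLatentExpansion

/-- The successive positions of the observed vertices along a walk in `W ⊕ L` that starts at an
observed vertex and never visits two latent vertices in a row. -/
def observedIndex {W L : Type*} (g : ℕ → W ⊕ L) : ℕ → ℕ
  | 0 => 0
  | j + 1 => observedIndex g j + if (g (observedIndex g j + 1)).isRight then 2 else 1

section Contraction

variable {G : MixedGraph V} {N : ℕ} {g : ℕ → V ⊕ V × V}

lemma exists_eq_inl_observedIndex (hg : G.latentDag.IsWalk N g) {α : V} (h0 : g 0 = .inl α)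
    {j : ℕ} (hj : observedIndex g j ≤ N) : ∃ v, g (observedIndex g j) = .inl v := by
  induction j with
  | zero => exact ⟨α, h0⟩
  | succ j ih =>
    simp only [observedIndex] at hj ⊢
    cases hr : g (observedIndex g j + 1) with
    | inl v => simp [hr]
    | inr p =>
      simp only [hr, Sum.isRight_inr, if_true] at hj ⊢
      have hadj := hg (observedIndex g j + 1) (by omega)
      rw [hr] at hadj
      exact exists_eq_inl_of_latentDag_dir_inr (latentDag_dir_of_adj_inr (.inl hadj))

lemma exists_isLatentExpansion (hM : G.IsMixed) (hg : G.latentDag.IsPath N g) {α β : V}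
    (h0 : g 0 = .inl α) (hN : g N = .inl β) :
    ∃ n f q, G.IsLatentExpansion n f g q ∧ q n = N := by
  set q := observedIndex g
  have hsucc (j : ℕ) : q (j + 1) = q j + if (g (q j + 1)).isRight then 2 else 1 := rfl
  have hstep (j : ℕ) : q (j + 1) = q j + 1 ∨ q (j + 1) = q j + 2 := by
    rw [hsucc]; split <;> simp
  obtain ⟨n, hn⟩ : ∃ n, q n = N := by
    obtain ⟨n, hn | ⟨rfl, hn⟩⟩ := exists_eq_or_add_one_eq rfl hstep N
    · exact ⟨n, hn⟩
    · rw [hsucc, hN] at hn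
      simp at hn
  have hmono : StrictMono q :=
    strictMono_nat_of_lt_succ fun j => by rcases hstep j with h | h <;> omega
  set f : ℕ → V := fun j => (g (q j)).elim id Prod.fst
  have hf (j : ℕ) (hj : j ≤ n) : g (q j) = .inl (f j) := by
    obtain ⟨v, hv⟩ : ∃ v, g (q j) = .inl v :=
      exists_eq_inl_observedIndex hg.1 h0 (hn ▸ hmono.monotone hj)
    simp [f, hv]
  refine ⟨n, f, q, ⟨hmono, rfl, hf, fun j hj => ?_⟩, hn⟩
  have hadj := hg.1 (q j) (hn ▸ hmono (by omega))
  rw [hf j hj.le] at hadj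
  cases hr : g (q j + 1) with
  | inl v =>
    have hq1 : q (j + 1) = q j + 1 := by simp [hsucc, hr]
    rw [← hq1, hf (j + 1) hj] at hadj
    exact .inl ⟨hq1, by simpa [adj] using hadj⟩
  | inr p =>
    have hq2 : q (j + 1) = q j + 2 := by simp [hsucc, hr]
    have hadj' := hg.1 (q j + 1) (by have := hmono.monotone (show j + 1 ≤ n by omega); omega)
    rw [hr, show q j + 1 + 1 = q (j + 1) by omega, hf (j + 1) hj] at hadj'
    rw [hr] at hadj
    have hp := latentDag_dir_of_adj_inr (.inr hadj)
    have hp' := latentDag_dir_of_adj_inr (.inl hadj')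
    have hne : f j ≠ f (j + 1) := fun h => by
      refine (hmono j.lt_succ_self).ne (hg.2 _ _ (hn ▸ hmono.monotone hj.le)
        (hn ▸ hmono.monotone hj) ?_)
      rw [hf j hj.le, hf (j + 1) hj, h]
    exact .inr ⟨hq2, bi_of_latentDag_dir hM hp hp' hne, p, rfl, hp, hp'⟩

lemma MConnecting.of_latentDag (hM : G.IsMixed) {Z : Set V} {α β : V}
    (h : G.latentDag.MConnecting (.inl '' Z) (.inl α) (.inl β)) : G.MConnecting Z α β := by
  obtain ⟨N, g, hg, h0, hN, hact⟩ := h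
  obtain ⟨n, f, q, e, rfl⟩ := exists_isLatentExpansion hM hg h0 hN
  refine ⟨n, f, e.isPath hg, ?_, ?_, fun j hj0 hjn => (e.isActiveAt_iff hM hj0 hjn).1 ?_⟩
  · simpa [e.zero, h0] using (e.apply_eq 0 (Nat.zero_le n)).symm
  · simpa [hN] using (e.apply_eq n le_rfl).symm
  · exact hact _ (e.zero ▸ e.strictMono hj0) (e.strictMono hjn)

end Contraction

noncomputable def latentLiftIndex (G : MixedGraph V) (f : ℕ → V) : ℕ → ℕ
  | 0 => 0
  | j + 1 => latentLiftIndex G f j + if G.bi (f j) (f (j + 1)) then 2 else 1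

/-- The path `f` with the latent vertex `(f j, f (j + 1))` inserted after each bidirected
step `f j ↔ f (j + 1)`. -/
noncomputable def latentLift (G : MixedGraph V) (f : ℕ → V) (k : ℕ) : V ⊕ V × V :=
  if ∃ j, G.latentLiftIndex f j = k then .inl (f (Function.invFun (G.latentLiftIndex f) k))
  else
    let j := Function.invFun (G.latentLiftIndex f) (k - 1)
    .inr (f j, f (j + 1))

section Lift

variable {G : MixedGraph V} {f : ℕ → V} {n : ℕ}

lemma latentLiftIndex_succ (j : ℕ) :
    G.latentLiftIndex f (j + 1) =
      G.latentLiftIndex f j + if G.bi (f j) (f (j + 1)) then 2 else 1 :=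
  rfl

lemma latentLiftIndex_strictMono : StrictMono (G.latentLiftIndex f) :=
  strictMono_nat_of_lt_succ fun j => by rw [latentLiftIndex_succ]; split <;> omega

lemma latentLift_latentLiftIndex (j : ℕ) :
    G.latentLift f (G.latentLiftIndex f j) = .inl (f j) := by
  rw [latentLift, if_pos ⟨j, rfl⟩,
    Function.leftInverse_invFun latentLiftIndex_strictMono.injective j]

lemma latentLift_latentLiftIndex_add_one {j : ℕ} (hb : G.bi (f j) (f (j + 1))) :
    G.latentLift f (G.latentLiftIndex f j + 1) = .inr (f j, f (j + 1)) := by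
  have hmono := latentLiftIndex_strictMono (G := G) (f := f)
  have hq : G.latentLiftIndex f (j + 1) = G.latentLiftIndex f j + 2 := by
    simp [latentLiftIndex_succ, hb]
  have hgap : ¬ ∃ i, G.latentLiftIndex f i = G.latentLiftIndex f j + 1 := by
    rintro ⟨i, hi⟩
    rcases le_or_gt i j with hij | hij
    · have := hmono.monotone hij; omega
    · have := hmono.monotone (show j + 1 ≤ i by omega); omega
  rw [latentLift, if_neg hgap, Nat.add_sub_cancel,
    Function.leftInverse_invFun hmono.injective j]

lemma isLatentExpansion_latentLift (hf : G.IsWalk n f) :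
    G.IsLatentExpansion n f (G.latentLift f) (G.latentLiftIndex f) := by
  refine ⟨latentLiftIndex_strictMono, rfl, fun j _ => latentLift_latentLiftIndex j,
    fun j hj => ?_⟩
  by_cases hb : G.bi (f j) (f (j + 1))
  · refine .inr ⟨by simp [latentLiftIndex_succ, hb], hb, _,
      latentLift_latentLiftIndex_add_one hb, ?_, ?_⟩ <;> simp [hb]
  · refine .inl ⟨by simp [latentLiftIndex_succ, hb], ?_⟩
    simpa [adj, hb] using hf j hj

lemma latentLift_cases {k : ℕ} (hk : k ≤ G.latentLiftIndex f n) :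
    (∃ j ≤ n, G.latentLiftIndex f j = k) ∨
      ∃ j < n, G.latentLiftIndex f j + 1 = k ∧ G.bi (f j) (f (j + 1)) := by
  have hmono := latentLiftIndex_strictMono (G := G) (f := f)
  obtain ⟨j, rfl | ⟨rfl, hj⟩⟩ := exists_eq_or_add_one_eq (q := G.latentLiftIndex f) rfl
    (fun j => by rw [latentLiftIndex_succ]; split <;> simp) k
  · exact .inl ⟨j, hmono.le_iff_le.1 hk, rfl⟩
  · refine .inr ⟨j, hmono.lt_iff_lt.1 (by omega), rfl, ?_⟩
    by_contra hb
    simp [latentLiftIndex_succ, hb] at hj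

lemma isPath_latentLift (hf : G.IsPath n f) :
    G.latentDag.IsPath (G.latentLiftIndex f n) (G.latentLift f) := by
  have e := isLatentExpansion_latentLift hf.1
  have hmono := latentLiftIndex_strictMono (G := G) (f := f)
  refine ⟨fun k hk => ?_, fun k k' hk hk' hkk' => ?_⟩
  · rcases latentLift_cases hk.le with ⟨j, -, rfl⟩ | ⟨j, hj, rfl, hb⟩
    · have hj := hmono.lt_iff_lt.1 hk
      rw [e.apply_eq j hj.le]
      rcases e.step j hj with ⟨hq, hd⟩ | ⟨-, -, p, hp, hp', -⟩
      · rw [← hq, e.apply_eq (j + 1) hj]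
        simpa [adj] using hd
      · rw [hp]
        exact .inr (.inl hp')
    · rw [latentLift_latentLiftIndex_add_one hb, show G.latentLiftIndex f j + 1 + 1 =
        G.latentLiftIndex f (j + 1) by simp [latentLiftIndex_succ, hb],
        latentLift_latentLiftIndex]
      simp [adj, hb]
  · rcases latentLift_cases hk with ⟨j, hj, rfl⟩ | ⟨j, hj, rfl, hb⟩ <;>
      rcases latentLift_cases hk' with ⟨j', hj', rfl⟩ | ⟨j', hj', rfl, hb'⟩
    · rw [latentLift_latentLiftIndex, latentLift_latentLiftIndex, Sum.inl.injEq] at hkk'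
      rw [hf.2 j j' hj hj' hkk']
    · simp [latentLift_latentLiftIndex, latentLift_latentLiftIndex_add_one hb'] at hkk'
    · simp [latentLift_latentLiftIndex, latentLift_latentLiftIndex_add_one hb] at hkk'
    · rw [latentLift_latentLiftIndex_add_one hb, latentLift_latentLiftIndex_add_one hb',
        Sum.inr.injEq, Prod.mk.injEq] at hkk'
      rw [hf.2 j j' hj.le hj'.le hkk'.1]

lemma MConnecting.latentDag (hM : G.IsMixed) {Z : Set V} {α β : V}
    (h : G.MConnecting Z α β) : G.latentDag.MConnecting (.inl '' Z) (.inl α) (.inl β) := by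
  obtain ⟨n, f, hf, h0, hn, hact⟩ := h
  have e := isLatentExpansion_latentLift hf.1
  refine ⟨_, _, isPath_latentLift hf, by rw [← e.zero, e.apply_eq 0 n.zero_le, h0],
    by rw [e.apply_eq n le_rfl, hn], fun k hk0 hkn => ?_⟩
  rcases latentLift_cases hkn.le with ⟨j, -, rfl⟩ | ⟨j, -, rfl, hb⟩
  · have hj0 : 0 < j := e.strictMono.lt_iff_lt.1 (e.zero ▸ hk0)
    have hjn : j < n := e.strictMono.lt_iff_lt.1 hkn
    exact (e.isActiveAt_iff hM hj0 hjn).2 (hact j hj0 hjn)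
  · exact latentDag_isActiveAt_of_eq_inr (latentLift_latentLiftIndex_add_one hb)

end Lift

lemma latentDag_mSep_iff {G : MixedGraph V} (hM : G.IsMixed) {X Y Z : Set V} :
    G.latentDag.MSep (.inl '' X) (.inl '' Y) (.inl '' Z) ↔ G.MSep X Y Z := by
  constructor
  · intro h a ha b hb hab
    exact h _ ⟨a, ha, rfl⟩ _ ⟨b, hb, rfl⟩ (hab.latentDag hM)
  · rintro h _ ⟨a, ha, rfl⟩ _ ⟨b, hb, rfl⟩ hab
    exact h a ha b hb (hab.of_latentDag hM)

end MixedGraph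

/-- Every MVR chain graph has the same independence model as a DAG under
marginalization: there exist a finite type `L` of latent vertices and a DAG `D` on the
vertex set `V ⊕ L` (no bidirected edges, no directed cycles) such that for all pairwise
disjoint `X, Y, Z ⊆ V` with `X, Y` nonempty, `X` and `Y` are m-separated given `Z` in `G`
iff they are d-separated (= m-separated, as `D` has only directed edges) given `Z` in `D`. -/
theorem mvr_is_dag_under_marginalization {V : Type u} [Fintype V]
    (G : MixedGraph V) (hG : G.IsMVR) :
    ∃ (L : Type u) (_ : Fintype L) (D : MixedGraph (V ⊕ L)),
      (∀ u v, ¬ D.bi u v) ∧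
      (∀ v, ¬ D.dir v v) ∧
      (∀ v, ¬ Relation.TransGen D.dir v v) ∧
      ∀ X Y Z : Set V, X.Nonempty → Y.Nonempty →
        Disjoint X Y → Disjoint X Z → Disjoint Y Z →
        (G.MSep X Y Z ↔ D.MSep (Sum.inl '' X) (Sum.inl '' Y) (Sum.inl '' Z)) := by
  refine ⟨V × V, inferInstance, G.latentDag, fun _ _ => MixedGraph.not_latentDag_bi,
    fun v h => MixedGraph.latentDag_acyclic hG v (.single h), MixedGraph.latentDag_acyclic hG,
    fun X Y Z _ _ _ _ _ => (MixedGraph.latentDag_mSep_iff hG.1).symm⟩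
end

section
/- Every MVR chain graph is a maximal ancestral graph: for every pair of distinct nonadjacent vertices α and β of an MVR chain graph G (i.e., vertices joined by no edge of G), there exists a set Z ⊆ V \ {α, β} such that {α} and {β} are m-separated given Z in G. -/
open scoped Classical

universe u

variable {V : Type u}

section Aux

variable {V : Type u}

/-- In an MVR chain graph there is no closed partially directed walk containing a
directed edge. -/
lemma MixedGraph.no_closed_walk (G : MixedGraph V) (hG : G.IsMVR) :
    ∀ n (f : ℕ → V), f n = f 0 →
      (∀ i, i < n → G.dir (f i) (f (i + 1)) ∨ G.bi (f i) (f (i + 1))) →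
      (∃ i, i < n ∧ G.dir (f i) (f (i + 1))) → False := by
  obtain ⟨⟨hsym, hbirr, hdirr, hdb, hdd⟩, hnc⟩ := hG
  intro n
  induction n using Nat.strong_induction_on with
  | _ n IH =>
    intro f hclosed hedges ⟨k, hk, hdirk⟩
    by_cases hinj : ∀ i j, i < n → j < n → f i = f j → i = j
    · rcases Nat.lt_or_ge n 2 with hn2 | hn2
      · interval_cases n
        · omega
        · have hk0 : k = 0 := by omega
          subst hk0
          rw [show (0 : ℕ) + 1 = 1 from rfl, hclosed] at hdirk
          exact hdirr _ hdirk
      · exact hnc ⟨n, f, hn2, hclosed, hinj, hedges, k, hk, hdirk⟩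
    · push_neg at hinj
      obtain ⟨i₀, j₀, hi₀, hj₀, hfe₀, hij₀⟩ := hinj
      -- arrange i < j
      obtain ⟨i, j, hi, hj, hfe, hij⟩ :
          ∃ i j, i < n ∧ j < n ∧ f i = f j ∧ i < j := by
        rcases hij₀.lt_or_gt with h | h
        · exact ⟨i₀, j₀, hi₀, hj₀, hfe₀, h⟩
        · exact ⟨j₀, i₀, hj₀, hi₀, hfe₀.symm, h⟩
      rcases Nat.lt_or_ge k i with hki | hki
      · -- use the outer walk, k < i
        refine IH (n - (j - i)) (by omega) (fun m => f (if m ≤ i then m else m + (j - i)))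
          ?_ ?_ ⟨k, by omega, ?_⟩
        · simp only [if_pos (Nat.zero_le i), if_neg (show ¬ n - (j - i) ≤ i by omega)]
          rw [show n - (j - i) + (j - i) = n by omega, hclosed]
        · intro m hm
          rcases lt_trichotomy m i with h | h | h
          · simp only [if_pos h.le, if_pos (by omega : m + 1 ≤ i)]
            exact hedges m (by omega)
          · subst h
            simp only [if_pos le_rfl, if_neg (by omega : ¬ m + 1 ≤ m)]
            rw [show m + 1 + (j - m) = j + 1 by omega, hfe]
            exact hedges j hj
          · simp only [if_neg (by omega : ¬ m ≤ i), if_neg (by omega : ¬ m + 1 ≤ i)]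
            rw [show m + 1 + (j - i) = m + (j - i) + 1 by omega]
            exact hedges (m + (j - i)) (by omega)
        · simp only [if_pos (by omega : k ≤ i), if_pos (by omega : k + 1 ≤ i)]
          exact hdirk
      · rcases Nat.lt_or_ge k j with hkj | hkj
        · -- use the inner walk, i ≤ k < j
          refine IH (j - i) (by omega) (fun m => f (i + m)) ?_ ?_ ⟨k - i, by omega, ?_⟩
          · show f (i + (j - i)) = f (i + 0)
            rw [show i + (j - i) = j by omega, show i + 0 = i from rfl, hfe]
          · intro m hm
            show G.dir (f (i + m)) (f (i + (m + 1))) ∨ G.bi (f (i + m)) (f (i + (m + 1)))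
            rw [show i + (m + 1) = i + m + 1 from rfl]
            exact hedges (i + m) (by omega)
          · show G.dir (f (i + (k - i))) (f (i + (k - i + 1)))
            rw [show i + (k - i) = k by omega, show i + (k - i + 1) = k + 1 by omega]
            exact hdirk
        · -- use the outer walk, j ≤ k
          refine IH (n - (j - i)) (by omega)
            (fun m => f (if m ≤ i then m else m + (j - i))) ?_ ?_ ⟨k - (j - i), by omega, ?_⟩
          · simp only [if_pos (Nat.zero_le i), if_neg (show ¬ n - (j - i) ≤ i by omega)]
            rw [show n - (j - i) + (j - i) = n by omega, hclosed]
          · intro m hm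
            rcases lt_trichotomy m i with h | h | h
            · simp only [if_pos h.le, if_pos (by omega : m + 1 ≤ i)]
              exact hedges m (by omega)
            · subst h
              simp only [if_pos le_rfl, if_neg (by omega : ¬ m + 1 ≤ m)]
              rw [show m + 1 + (j - m) = j + 1 by omega, hfe]
              exact hedges j hj
            · simp only [if_neg (by omega : ¬ m ≤ i), if_neg (by omega : ¬ m + 1 ≤ i)]
              rw [show m + 1 + (j - i) = m + (j - i) + 1 by omega]
              exact hedges (m + (j - i)) (by omega)
          · rcases Nat.eq_or_lt_of_le (show i ≤ k - (j - i) by omega) with h | h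
            · simp only [if_pos (le_of_eq h.symm), if_neg (by omega : ¬ k - (j - i) + 1 ≤ i)]
              rw [show k - (j - i) + 1 + (j - i) = k + 1 by omega, ← h, hfe,
                show j = k by omega]
              exact hdirk
            · simp only [if_neg (by omega : ¬ k - (j - i) ≤ i),
                if_neg (by omega : ¬ k - (j - i) + 1 ≤ i)]
              rw [show k - (j - i) + (j - i) = k by omega,
                show k - (j - i) + 1 + (j - i) = k + 1 by omega]
              exact hdirk

/-- Convert a reflexive-transitive closure to an explicit walk. -/
lemma rtg_to_walk {r : V → V → Prop} {u v : V} (h : Relation.ReflTransGen r u v) :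
    ∃ (m : ℕ) (g : ℕ → V), g 0 = u ∧ g m = v ∧ ∀ i, i < m → r (g i) (g (i + 1)) := by
  induction h with
  | refl => exact ⟨0, fun _ => u, rfl, rfl, by omega⟩
  | @tail b c h1 h2 ih =>
    obtain ⟨m, g, h0, hm, he⟩ := ih
    refine ⟨m + 1, fun i => if i ≤ m then g i else c, ?_, ?_, ?_⟩
    · simp [h0]
    · simp
    · intro i hi
      rcases Nat.lt_or_ge i m with h | h
      · simp only [if_pos h.le, if_pos (by omega : i + 1 ≤ m)]
        exact he i h
      · have : i = m := by omega
        subst this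
        simp only [if_pos le_rfl, if_neg (by omega : ¬ i + 1 ≤ i), hm]
        exact h2

/-- In an MVR chain graph there is no partially directed walk from `u` to `v` together
with a directed path back from `v` to `u ≠ v`. -/
lemma MixedGraph.no_mixed_cycle (G : MixedGraph V) (hG : G.IsMVR) {u v : V}
    (h1 : Relation.ReflTransGen (fun a b => G.dir a b ∨ G.bi a b) u v)
    (h2 : Relation.ReflTransGen G.dir v u) (hne : u ≠ v) : False := by
  obtain ⟨m1, g1, hg10, hg1m, hg1e⟩ := rtg_to_walk h1
  obtain ⟨m2, g2, hg20, hg2m, hg2e⟩ := rtg_to_walk h2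
  have hm2 : 1 ≤ m2 := by
    rcases Nat.eq_zero_or_pos m2 with h | h
    · subst h; exact absurd (hg20 ▸ hg2m : v = u).symm hne
    · exact h
  refine G.no_closed_walk hG (m1 + m2) (fun i => if i ≤ m1 then g1 i else g2 (i - m1))
    ?_ ?_ ⟨m1, by omega, ?_⟩
  · simp only [if_pos (Nat.zero_le m1), if_neg (show ¬ m1 + m2 ≤ m1 by omega), hg10]
    rw [show m1 + m2 - m1 = m2 by omega, hg2m]
  · intro i hi
    rcases lt_trichotomy i m1 with h | h | h
    · simp only [if_pos h.le, if_pos (by omega : i + 1 ≤ m1)]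
      exact hg1e i h
    · subst h
      simp only [if_pos le_rfl, if_neg (by omega : ¬ i + 1 ≤ i), hg1m,
        show i + 1 - i = 1 from by omega]
      left
      have := hg2e 0 hm2
      rwa [hg20] at this
    · simp only [if_neg (by omega : ¬ i ≤ m1), if_neg (by omega : ¬ i + 1 ≤ m1)]
      left
      rw [show i + 1 - m1 = i - m1 + 1 by omega]
      exact hg2e (i - m1) (by omega)
  · simp only [if_pos le_rfl, if_neg (by omega : ¬ m1 + 1 ≤ m1), hg1m,
      show m1 + 1 - m1 = 1 from by omega]
    have := hg2e 0 hm2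
    rwa [hg20] at this

end Aux

/-- Every MVR chain graph is a maximal ancestral graph: for every pair
of distinct nonadjacent vertices `α, β` there is a set `Z ⊆ V \ {α, β}` such that `{α}`
and `{β}` are m-separated given `Z`. -/
theorem mvr_is_maximal {V : Type u} (G : MixedGraph V) (hG : G.IsMVR) (α β : V)
    (hne : α ≠ β) (hnadj : ¬ G.adj α β) :
    ∃ Z : Set V, α ∉ Z ∧ β ∉ Z ∧ G.MSep {α} {β} Z := by
  classical
  obtain ⟨⟨hsym, hbirr, hdirr, hdb, hdd⟩, -⟩ := id hG
  set S : Set V := G.ancSet {α, β} with hS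
  set Z : Set V := S \ {α, β} with hZdef
  refine ⟨Z, fun h => h.2 (Or.inl rfl), fun h => h.2 (Or.inr rfl), ?_⟩
  intro a ha b hb hmc
  rw [Set.mem_singleton_iff] at ha hb
  rw [ha, hb] at hmc
  obtain ⟨n, f, ⟨hwalk, hinj⟩, h0, hn', hcond⟩ := hmc
  -- n ≥ 2
  have hn2 : 2 ≤ n := by
    rcases Nat.lt_or_ge n 2 with h | h
    · exfalso
      interval_cases n
      · exact hne (h0.symm.trans hn')
      · have := hwalk 0 (by omega)
        rw [h0, show (0 : ℕ) + 1 = 1 from rfl, hn'] at this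
        exact hnadj this
    · exact h
  -- ancestors of Z are in S
  have hZS : G.ancSet Z ⊆ S := by
    rintro u ⟨s, hsZ, hus⟩
    obtain ⟨t, ht, hst⟩ := hsZ.1
    exact ⟨t, ht, hus.trans hst⟩
  have hαS : α ∈ S := ⟨α, Or.inl rfl, Relation.ReflTransGen.refl⟩
  have hβS : β ∈ S := ⟨β, Or.inr rfl, Relation.ReflTransGen.refl⟩
  -- rightward directed run
  have hright : ∀ d k, n - k = d → k < n → G.dir (f k) (f (k + 1)) → f (k + 1) ∈ S := by
    intro d
    induction d using Nat.strong_induction_on with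
    | _ d IHd =>
      intro k hd hk hdir
      rcases Nat.eq_or_lt_of_le (show k + 1 ≤ n from hk) with h | h
      · rw [h, hn']; exact hβS
      · by_cases hc : G.IsColliderAt f (k + 1)
        · exact hZS ((hcond (k + 1) (by omega) h).1 hc)
        · have hA : G.dir (f (k + 1 - 1)) (f (k + 1)) ∨ G.bi (f (k + 1 - 1)) (f (k + 1)) := by
            rw [Nat.add_sub_cancel]; exact Or.inl hdir
          have hB : ¬ (G.dir (f (k + 1 + 1)) (f (k + 1)) ∨ G.bi (f (k + 1)) (f (k + 1 + 1))) :=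
            fun hB => hc ⟨hA, hB⟩
          rcases hwalk (k + 1) h with h' | h' | h'
          · have : f (k + 2) ∈ S := IHd (n - (k + 1)) (by omega) (k + 1) rfl h h'
            obtain ⟨t, ht, hp⟩ := this
            exact ⟨t, ht, Relation.ReflTransGen.head h' hp⟩
          · exact absurd (Or.inl h') hB
          · exact absurd (Or.inr h') hB
  -- leftward directed run
  have hleft : ∀ k, k ≤ n → 0 < k → G.dir (f k) (f (k - 1)) → f (k - 1) ∈ S := by
    intro k
    induction k using Nat.strong_induction_on with
    | _ k IHk =>
      intro hkn hk hdir
      rcases Nat.eq_or_lt_of_le (show 0 + 1 ≤ k from hk) with h | h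
      · rw [show k - 1 = 0 by omega, h0]; exact hαS
      · by_cases hc : G.IsColliderAt f (k - 1)
        · exact hZS ((hcond (k - 1) (by omega) (by omega)).1 hc)
        · have hB : G.dir (f (k - 1 + 1)) (f (k - 1)) ∨ G.bi (f (k - 1)) (f (k - 1 + 1)) := by
            rw [show k - 1 + 1 = k by omega]; exact Or.inl hdir
          have hA : ¬ (G.dir (f (k - 1 - 1)) (f (k - 1)) ∨ G.bi (f (k - 1 - 1)) (f (k - 1))) :=
            fun hA => hc ⟨hA, hB⟩
          rw [show k - 1 - 1 = k - 2 by omega] at hA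
          have hw := hwalk (k - 2) (by omega)
          rw [show k - 2 + 1 = k - 1 by omega] at hw
          rcases hw with h' | h' | h'
          · exact absurd (Or.inl h') hA
          · have h'' : G.dir (f (k - 1)) (f (k - 1 - 1)) := by
              rw [show k - 1 - 1 = k - 2 by omega]; exact h'
            have : f (k - 1 - 1) ∈ S := IHk (k - 1) (by omega) (by omega) (by omega) h''
            rw [show k - 1 - 1 = k - 2 by omega] at this
            obtain ⟨t, ht, hp⟩ := this
            exact ⟨t, ht, Relation.ReflTransGen.head h'' (by
              rwa [show k - 1 - 1 = k - 2 by omega])⟩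
          · exact absurd (Or.inr h') hA
  -- every internal vertex is a collider
  have hcolall : ∀ i, 0 < i → i < n → G.IsColliderAt f i := by
    intro i h1 h2
    by_contra hnc'
    have hniZ : f i ∉ Z := (hcond i h1 h2).2 hnc'
    have hniS : f i ∉ S := by
      intro hS'
      apply hniZ
      refine ⟨hS', ?_⟩
      rintro (h | h)
      · have := hinj i 0 (by omega) (by omega) (by rw [h0]; exact h)
        omega
      · have := hinj i n (by omega) le_rfl (by rw [hn']; exact h)
        omega
    by_cases hA : G.dir (f (i - 1)) (f i) ∨ G.bi (f (i - 1)) (f i)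
    · have hB : ¬ (G.dir (f (i + 1)) (f i) ∨ G.bi (f i) (f (i + 1))) :=
        fun hB => hnc' ⟨hA, hB⟩
      rcases hwalk i h2 with h' | h' | h'
      · obtain ⟨t, ht, hp⟩ := hright (n - i) i rfl h2 h'
        exact hniS ⟨t, ht, Relation.ReflTransGen.head h' hp⟩
      · exact hB (Or.inl h')
      · exact hB (Or.inr h')
    · have hw := hwalk (i - 1) (by omega)
      rw [show i - 1 + 1 = i by omega] at hw
      rcases hw with h' | h' | h'
      · exact hA (Or.inl h')
      · obtain ⟨t, ht, hp⟩ := hleft i (by omega) h1 h'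
        exact hniS ⟨t, ht, Relation.ReflTransGen.head h' hp⟩
      · exact hA (Or.inr h')
  -- partially directed walk α = f 0 → f 1 → ⋯ → f k
  have hchain : ∀ k, k ≤ n - 1 →
      Relation.ReflTransGen (fun a b => G.dir a b ∨ G.bi a b) α (f k) := by
    intro k
    induction k with
    | zero => intro _; rw [← h0]
    | succ k ih =>
      intro hk
      refine (ih (by omega)).tail ?_
      have hc := (hcolall (k + 1) (by omega) (by omega)).1
      rwa [Nat.add_sub_cancel] at hc
  -- f (n-1) is a collider, hence an ancestor of α or β; either way a contradiction
  have hcn := hcolall (n - 1) (by omega) (by omega)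
  obtain ⟨t, ht, hanc⟩ := hZS ((hcond (n - 1) (by omega) (by omega)).1 hcn)
  rcases ht with ht | ht
  · subst ht
    refine G.no_mixed_cycle hG (hchain (n - 1) le_rfl) hanc ?_
    intro h
    have := hinj 0 (n - 1) (by omega) (by omega) (by rw [h0, h])
    omega
  · subst ht
    have hc2 := hcn.2
    rw [show n - 1 + 1 = n by omega, hn'] at hc2
    have hstep : G.dir t (f (n - 1)) ∨ G.bi t (f (n - 1)) := by
      rcases hc2 with h | h
      · exact Or.inl h
      · exact Or.inr (hsym _ _ h)
    refine G.no_mixed_cycle hG (Relation.ReflTransGen.single hstep) hanc ?_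
    intro h
    have := hinj n (n - 1) le_rfl (by omega) (by rw [hn', h])
    omega
end

section
/- Let G be an MVR chain graph. If an independence model ℐ over the vertex set of G is a semi-graphoid and satisfies the block-recursive Markov property of type IV with respect to G, then ℐ satisfies the multivariate regression (MR) Markov property with respect to G: for every chain component T and every A ⊆ T, (MR1) if A is connected then A ⫫ pre(T) \ pa_G(A) | pa_G(A), and (MR2) if A is disconnected with connected components A₁, …, A_r then Aᵢ ⫫ Aⱼ | pre(T) for all i ≠ j. -/
open scoped Classical

universe u

variable {V : Type u}

section AuxLemmas

variable {V : Type u}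

private lemma rtg_symm {R : V → V → Prop} (hs : ∀ a b, R a b → R b a) {a b : V}
    (h : Relation.ReflTransGen R a b) : Relation.ReflTransGen R b a := by
  induction h with
  | refl => exact Relation.ReflTransGen.refl
  | tail _ hbc ih => exact Relation.ReflTransGen.head (hs _ _ hbc) ih

private lemma exists_chain {R : V → V → Prop} {a b : V}
    (h : Relation.ReflTransGen R a b) :
    ∃ n : ℕ, ∃ f : ℕ → V, f 0 = a ∧ f n = b ∧ ∀ i, i < n → R (f i) (f (i + 1)) := by
  induction h with
  | refl => exact ⟨0, fun _ => a, rfl, rfl, fun i hi => absurd hi (Nat.not_lt_zero i)⟩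
  | @tail p c hab hbc ih =>
    obtain ⟨n, f, h0, hn, hstep⟩ := ih
    refine ⟨n + 1, fun i => if i ≤ n then f i else c, by simp [h0], by simp, ?_⟩
    intro i hi
    rcases lt_or_eq_of_le (Nat.lt_succ_iff.mp hi) with hlt | heq
    · have h1 : i ≤ n := Nat.le_of_lt hlt
      have h2 : i + 1 ≤ n := Nat.succ_le_of_lt hlt
      simpa [h1, h2] using hstep i hlt
    · subst heq
      have h2 : ¬ (i + 1 ≤ i) := by omega
      simpa [h2, hn] using hbc

private lemma exists_injective_chain {R : V → V → Prop} {a b : V}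
    (h : Relation.ReflTransGen R a b) :
    ∃ n : ℕ, ∃ f : ℕ → V, f 0 = a ∧ f n = b ∧ (∀ i, i < n → R (f i) (f (i + 1))) ∧
      (∀ i j, i ≤ n → j ≤ n → f i = f j → i = j) := by
  classical
  have hne := exists_chain h
  obtain ⟨f, h0, hn, hstep⟩ := Nat.find_spec hne
  set n := Nat.find hne with hdefn
  refine ⟨n, f, h0, hn, hstep, ?_⟩
  by_contra hcon
  push_neg at hcon
  obtain ⟨i, j, hi, hj, hfeq, hij⟩ := hcon
  -- wlog i < j
  wlog hlt : i < j generalizing i j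
  · exact this j i hj hi hfeq.symm (Ne.symm hij) (by omega)
  -- shortcut the chain
  set m := n - (j - i) with hm
  have hmn : m < n := by omega
  apply Nat.find_min hne hmn
  refine ⟨fun k => if k ≤ i then f k else f (k + (j - i)), by simp [h0], ?_, ?_⟩
  · by_cases hmi : m ≤ i
    · have hji : j = n := by omega
      have hmi' : m = i := by omega
      show (if m ≤ i then f m else f (m + (j - i))) = b
      rw [if_pos hmi, hmi', hfeq, hji, hn]
    · show (if m ≤ i then f m else f (m + (j - i))) = b
      rw [if_neg hmi]
      have : m + (j - i) = n := by omega
      rw [this, hn]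
  · intro k hk
    by_cases h1 : k + 1 ≤ i
    · have h2 : k ≤ i := by omega
      have h3 : k < n := by omega
      simpa [h1, h2] using hstep k h3
    · by_cases h2 : k ≤ i
      · have hki : k = i := by omega
        have hjn : j < n := by omega
        have e1 : k + 1 + (j - i) = j + 1 := by omega
        show R (if k ≤ i then f k else f (k + (j - i)))
          (if k + 1 ≤ i then f (k + 1) else f (k + 1 + (j - i)))
        rw [if_pos h2, if_neg h1, e1, hki, hfeq]
        exact hstep j hjn
      · have e1 : k + 1 + (j - i) = (k + (j - i)) + 1 := by omega
        have h3 : k + (j - i) < n := by omega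
        show R (if k ≤ i then f k else f (k + (j - i)))
          (if k + 1 ≤ i then f (k + 1) else f (k + 1 + (j - i)))
        rw [if_neg h2, if_neg h1, e1]
        exact hstep _ h3

private lemma no_dir_of_biConn {G : MixedGraph V} (hG : G.IsMVR) {w v : V}
    (hb : Relation.ReflTransGen G.bi w v) (hd : G.dir w v) : False := by
  obtain ⟨hmix, hcyc⟩ := hG
  obtain ⟨hbisymm, _, hdirr, _, _⟩ := hmix
  have hwv : w ≠ v := fun hh => hdirr v (hh ▸ hd)
  have hb' : Relation.ReflTransGen G.bi v w := rtg_symm hbisymm hb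
  obtain ⟨n, f, h0, hn, hstep, hinj⟩ := exists_injective_chain hb'
  have hn1 : 1 ≤ n := by
    rcases Nat.eq_zero_or_pos n with hz | hp
    · subst hz; exact absurd (h0 ▸ hn : v = w).symm hwv
    · exact hp
  apply hcyc
  refine ⟨n + 1, fun i => if i = 0 then w else f (i - 1), by omega, ?_, ?_, ?_, ?_⟩
  · show (if n + 1 = 0 then w else f (n + 1 - 1)) = (if (0 : ℕ) = 0 then w else f (0 - 1))
    rw [if_neg (Nat.succ_ne_zero n), if_pos rfl]
    have : n + 1 - 1 = n := by omega
    rw [this, hn]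
  · intro i j hi hj hfeq
    replace hfeq : (if i = 0 then w else f (i - 1)) = (if j = 0 then w else f (j - 1)) := hfeq
    by_cases hi0 : i = 0 <;> by_cases hj0 : j = 0
    · omega
    · exfalso
      rw [if_pos hi0, if_neg hj0] at hfeq
      have : j - 1 = n := hinj (j - 1) n (by omega) (le_refl n) (by rw [← hfeq, hn])
      omega
    · exfalso
      rw [if_neg hi0, if_pos hj0] at hfeq
      have : i - 1 = n := hinj (i - 1) n (by omega) (le_refl n) (by rw [hfeq, hn])
      omega
    · rw [if_neg hi0, if_neg hj0] at hfeq
      have := hinj (i - 1) (j - 1) (by omega) (by omega) hfeq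
      omega
  · intro i hi
    by_cases hi0 : i = 0
    · subst hi0
      show G.dir (if (0:ℕ) = 0 then w else f (0-1)) (if (0:ℕ)+1 = 0 then w else f (0+1-1)) ∨ _
      rw [if_pos rfl, if_neg (Nat.succ_ne_zero 0)]
      rw [show (0:ℕ)+1-1 = 0 from rfl, h0]
      exact Or.inl hd
    · right
      have hne1 : i + 1 ≠ 0 := by omega
      show G.bi (if i = 0 then w else f (i-1)) (if i+1 = 0 then w else f (i+1-1))
      rw [if_neg hi0, if_neg hne1]
      have e1 : i + 1 - 1 = (i - 1) + 1 := by omega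
      rw [e1]
      exact hstep (i - 1) (by omega)
  · refine ⟨0, by omega, ?_⟩
    show G.dir (if (0:ℕ) = 0 then w else f (0-1)) (if (0:ℕ)+1 = 0 then w else f (0+1-1))
    rw [if_pos rfl, if_neg (Nat.succ_ne_zero 0)]
    rw [show (0:ℕ)+1-1 = 0 from rfl, h0]
    exact hd

private lemma chainComp_eq_of_mem {G : MixedGraph V} (hbs : ∀ a b, G.bi a b → G.bi b a)
    {t w : V} (hw : w ∈ G.chainComp t) : G.chainComp w = G.chainComp t := by
  ext u
  exact ⟨fun hu => Relation.ReflTransGen.trans hw hu,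
    fun hu => Relation.ReflTransGen.trans (rtg_symm hbs hw) hu⟩

private lemma paSet_subset_paD {G : MixedGraph V} (hG : G.IsMVR) {T A : Set V}
    (hT : G.IsChainComp T) (hA : A ⊆ T) : G.paSet A ⊆ G.paD T := by
  rintro w ⟨hwA, v, hvA, hdir⟩
  obtain ⟨t, rfl⟩ := hT
  have hbs := hG.1.1
  have hwT : w ∉ G.chainComp t := by
    intro hwT
    exact no_dir_of_biConn hG
      (Relation.ReflTransGen.trans (rtg_symm hbs hwT) (hA hvA)) hdir
  refine ⟨⟨w, rfl⟩, ⟨t, rfl⟩, ?_, w, Relation.ReflTransGen.refl, v, hA hvA, hdir⟩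
  intro heq
  exact hwT (heq ▸ (Relation.ReflTransGen.refl : w ∈ G.chainComp w))

private lemma rtg_compRel_r {G : MixedGraph V} (hbs : ∀ a b, G.bi a b → G.bi b a)
    {r : Set V → Set V → Prop} (hr : G.ConsistentCompOrder r) {T C : Set V}
    (hrt : Relation.ReflTransGen G.compRel T C) : C = T ∨ r T C := by
  induction hrt with
  | refl => exact Or.inl rfl
  | @tail C C' hTC hCC' ih =>
    right
    obtain ⟨hC, hC', hne, u, huC, v, hvC', hdir⟩ := hCC'
    have hu : G.chainComp u = C := by
      obtain ⟨c, rfl⟩ := hC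
      exact chainComp_eq_of_mem hbs huC
    have hpa : u ∈ G.paD C' := by
      show G.compRel (G.chainComp u) C'
      rw [hu]
      exact ⟨hC, hC', hne, u, huC, v, hvC', hdir⟩
    have hrCC' : r C C' := by
      have := hr.2.2.2 C' hC' hpa
      rwa [show G.pre r C' = {w | r (G.chainComp w) C'} from rfl, Set.mem_setOf_eq, hu] at this
    rcases ih with hh | hh
    · exact hh ▸ hrCC'
    · exact hr.2.1 _ _ _ hh hrCC'

private lemma pre_subset_ndD {G : MixedGraph V} (hbs : ∀ a b, G.bi a b → G.bi b a)
    {r : Set V → Set V → Prop} (hr : G.ConsistentCompOrder r) {T : Set V} :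
    G.pre r T ⊆ G.ndD T := by
  intro v hv hRT
  rcases rtg_compRel_r hbs hr hRT with hh | hh
  · exact hr.1 T (hh ▸ hv)
  · exact hr.1 T (hr.2.1 _ _ _ hh hv)

private lemma decomp_subset {I : Set V → Set V → Set V → Prop} (hI : SemiGraphoid I)
    {X S Z : Set V} (hS : I X S Z) {S' : Set V} (hs : S' ⊆ S) : I X S' Z := by
  have : I X (S' ∪ (S \ S')) Z := by rwa [Set.union_diff_cancel hs]
  exact hI.2.1 _ _ _ _ this

private lemma disIn_subset {G : MixedGraph V} {A : Set V} {x : V} (hx : x ∈ A) :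
    G.disIn A x ⊆ A := by
  intro y hy
  induction hy with
  | refl => exact hx
  | tail _ hstep _ => exact hstep.2.1

private lemma biConnIn_disIn {G : MixedGraph V} {A : Set V} {x u : V}
    (h : G.biConnIn A x u) : G.biConnIn (G.disIn A x) x u := by
  induction h with
  | refl => exact Relation.ReflTransGen.refl
  | @tail p c hxp hpc ih =>
    exact Relation.ReflTransGen.tail ih
      ⟨hxp, Relation.ReflTransGen.tail hxp hpc, hpc.2.2⟩

private lemma biConnIn_symm {G : MixedGraph V} (hbs : ∀ a b, G.bi a b → G.bi b a)
    {A : Set V} {u v : V} (h : G.biConnIn A u v) : G.biConnIn A v u :=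
  rtg_symm (fun a b hab => ⟨hab.2.1, hab.1, hbs _ _ hab.2.2⟩) h

end AuxLemmas

/-- For an MVR chain graph `G`, if an independence model `ℐ` is a
semi-graphoid and satisfies the block-recursive Markov property of type IV, then it
satisfies the multivariate regression (MR) Markov property (with respect to any strict
total order on the chain components satisfying `pa_D(T) ⊆ pre(T)`). -/
theorem typeIV_implies_MR {V : Type u} (G : MixedGraph V) (hG : G.IsMVR)
    (I : Set V → Set V → Set V → Prop) (hI : SemiGraphoid I)
    (r : Set V → Set V → Prop) (hr : G.ConsistentCompOrder r)
    (h : TypeIVMarkov I G) :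
    MRMarkov I G r := by
  intro T hT A hA
  have hbs : ∀ a b, G.bi a b → G.bi b a := hG.1.1
  set P := G.paD T with hP
  set Q := G.pre r T \ P with hQ
  have hPpre : P ⊆ G.pre r T := hr.2.2.2 T hT
  have hpreNd : G.pre r T ⊆ G.ndD T := pre_subset_ndD hbs hr
  have hPQ : P ∪ Q = G.pre r T := Set.union_diff_cancel hPpre
  -- T ⫫ Q | P
  have hTQ : I T Q P :=
    decomp_subset hI (h T hT).1 (fun z hz => ⟨hpreNd hz.1, hz.2⟩)
  constructor
  · -- MR1
    intro _hconn
    have hAQ : I A Q P := hI.1 _ _ _ (decomp_subset hI (hI.1 _ _ _ hTQ) hA)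
    have hIV1 : I A (P \ G.paSet A) (G.paSet A) := (h T hT).2.1 A hA
    have hpaP : G.paSet A ⊆ P := paSet_subset_paD hG hT hA
    have hPA : G.paSet A ∪ (P \ G.paSet A) = P := Set.union_diff_cancel hpaP
    have hc : I A (Q ∪ (P \ G.paSet A)) (G.paSet A) :=
      hI.2.2.2 _ _ _ _ (by rwa [hPA]) hIV1
    have heq : Q ∪ (P \ G.paSet A) = G.pre r T \ G.paSet A := by
      ext z
      constructor
      · rintro (⟨h1, h2⟩ | ⟨h1, h2⟩)
        · exact ⟨h1, fun hz => h2 (hpaP hz)⟩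
        · exact ⟨hPpre h1, h2⟩
      · rintro ⟨h1, h2⟩
        by_cases hz : z ∈ P
        · exact Or.inr ⟨hz, h2⟩
        · exact Or.inl ⟨h1, hz⟩
    rwa [heq] at hc
  · -- MR2
    intro x hx y hy hne
    set A1 := G.disIn A x with hA1
    set A2 := G.disIn A y with hA2
    have hA1A : A1 ⊆ A := disIn_subset hx
    have hA2A : A2 ⊆ A := disIn_subset hy
    have hdisj : ∀ z, z ∈ A1 → z ∈ A2 → False := by
      intro z hz1 hz2
      apply hne
      have e1 : G.disIn A x = G.disIn A z := by
        ext u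
        exact ⟨fun hu => Relation.ReflTransGen.trans (biConnIn_symm hbs hz1) hu,
          fun hu => Relation.ReflTransGen.trans hz1 hu⟩
      have e2 : G.disIn A y = G.disIn A z := by
        ext u
        exact ⟨fun hu => Relation.ReflTransGen.trans (biConnIn_symm hbs hz2) hu,
          fun hu => Relation.ReflTransGen.trans hz2 hu⟩
      rw [hA1, hA2, e1, e2]
    have hconn1 : G.ConnectedIn A1 := by
      refine ⟨⟨x, Relation.ReflTransGen.refl⟩, ?_⟩
      intro u hu v hv
      exact Relation.ReflTransGen.trans
        (biConnIn_symm hbs (biConnIn_disIn hu)) (biConnIn_disIn hv)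
    have hA2sub : A2 ⊆ T \ G.Nb A1 := by
      intro w hw
      refine ⟨hA (hA2A hw), ?_⟩
      rintro (hw1 | ⟨v, hvA1, hbi⟩)
      · exact hdisj w hw1 hw
      · have : w ∈ A1 :=
          Relation.ReflTransGen.trans hvA1
            (Relation.ReflTransGen.single ⟨hA1A hvA1, hA2A hw, hbs _ _ hbi⟩)
        exact hdisj w this hw
    -- Q ⫫ T \ A2 | P ∪ A2
    have hQT : I Q T P := hI.1 _ _ _ hTQ
    have hT2 : (T \ A2) ∪ A2 = T := Set.diff_union_of_subset (hA2A.trans hA)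
    have s4 : I Q (T \ A2) (P ∪ A2) := hI.2.2.1 _ _ _ _ (by rwa [hT2])
    have hA1T2 : A1 ⊆ T \ A2 := fun z hz => ⟨hA (hA1A hz), fun h2 => hdisj z hz h2⟩
    have s6 : I A1 Q (P ∪ A2) := hI.1 _ _ _ (decomp_subset hI s4 hA1T2)
    have s8 : I A1 A2 P :=
      decomp_subset hI ((h T hT).2.2 A1 (hA1A.trans hA) hconn1) hA2sub
    have s9 : I A1 (Q ∪ A2) P := hI.2.2.2 _ _ _ _ s6 s8
    have s10 : I A1 A2 (P ∪ Q) := hI.2.2.1 _ _ _ _ (by rwa [Set.union_comm] at s9)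
    rwa [hPQ] at s10
end

section
/- In an MVR chain graph G, every chain component T forms a head with tail equal to its parent set: (1) T = barren(T), i.e., no vertex of T has a proper descendant in T; (2) T is contained in a single district of the induced subgraph of G on an(T); and (3) dis_{an(T)}(T) = T, so that tail(T) = (dis_{an(T)}(T) \ T) ∪ pa_G(dis_{an(T)}(T)) = pa_G(T). -/
open scoped Classical

universe u

variable {V : Type u}

/-!
If a vertex `x` of a chain component `T` had a proper descendant in `T`, or if some
`z ∈ an(T) \ T` were joined to `T` by a bidirected edge, then the first directed edge out of
`x` (resp. `z`), followed by directed edges down to `T` and bidirected edges inside `T`,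
would return to its start; shortening this closed partially directed walk to one without
repeated vertices gives a partially directed cycle. So `T` is barren and is its own district
in `G_{an(T)}`, whence its tail is `pa_G(T)`.
-/

namespace Relation

variable {α : Type*} {r : α → α → Prop}

theorem ReflTransGen.exists_walk {a b : α} (h : ReflTransGen r a b) :
    ∃ (n : ℕ) (f : ℕ → α), f 0 = a ∧ f n = b ∧ ∀ i < n, r (f i) (f (i + 1)) := by
  induction h with
  | refl => exact ⟨0, fun _ => a, rfl, rfl, by simp⟩
  | @tail c d _ hcd ih =>
    obtain ⟨n, f, h0, hn, hf⟩ := ih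
    refine ⟨n + 1, fun i => if i ≤ n then f i else d, by simp [h0], by simp, fun i hi => ?_⟩
    rcases Nat.lt_succ_iff_lt_or_eq.mp hi with hi | rfl
    · simpa [hi.le, Nat.succ_le_of_lt hi] using hf i hi
    · simpa [hn] using hcd

theorem exists_walk_shortcut {n : ℕ} {f : ℕ → α} (hf : ∀ k < n, r (f k) (f (k + 1)))
    {i j : ℕ} (hij : i < j) (hjn : j ≤ n) (heq : f i = f j) :
    ∃ g : ℕ → α, g 0 = f 0 ∧ g (n - (j - i)) = f n ∧
      ∀ k < n - (j - i), r (g k) (g (k + 1)) := by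
  refine ⟨fun k => if k ≤ i then f k else f (k + (j - i)), by simp, ?_, fun k hk => ?_⟩
  · dsimp only
    split_ifs with h
    · rw [show n - (j - i) = i by omega, heq, show j = n by omega]
    · rw [show n - (j - i) + (j - i) = n by omega]
  · by_cases hki : k < i
    · simpa [hki.le, Nat.succ_le_of_lt hki] using hf k (by omega)
    · by_cases hk' : k = i
      · subst hk'
        simpa [heq, show k + 1 + (j - k) = j + 1 by omega] using hf j (by omega)
      · simpa [show ¬ k ≤ i by omega, show ¬ k + 1 ≤ i by omega,
          show k + 1 + (j - i) = k + (j - i) + 1 by omega] using hf (k + (j - i)) (by omega)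

theorem ReflTransGen.exists_injective_walk {a b : α} (h : ReflTransGen r a b) :
    ∃ (n : ℕ) (f : ℕ → α), f 0 = a ∧ f n = b ∧ (∀ i < n, r (f i) (f (i + 1))) ∧
      ∀ i j, i ≤ n → j ≤ n → f i = f j → i = j := by
  have hex := h.exists_walk
  obtain ⟨f, h0, hn, hf⟩ := Nat.find_spec hex
  refine ⟨Nat.find hex, f, h0, hn, hf, fun i j hi hj heq => ?_⟩
  by_contra hne
  wlog hij : i < j generalizing i j
  · exact this j i hj hi heq.symm (Ne.symm hne) (by omega)
  obtain ⟨g, hg0, hgn, hg⟩ := exists_walk_shortcut hf hij hj heq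
  exact Nat.find_min hex (by omega : Nat.find hex - (j - i) < Nat.find hex)
    ⟨g, hg0.trans h0, hgn.trans hn, hg⟩

end Relation

open Relation

namespace MixedGraph

variable {G : MixedGraph V} {a b v x y : V}

/-- A step `u → w` or `u ↔ w` of a partially directed walk. -/
def pdStep (G : MixedGraph V) (u w : V) : Prop := G.dir u w ∨ G.bi u w

theorem IsMVR.not_pdReach_of_dir (hG : G.IsMVR) (hab : G.dir a b) :
    ¬ ReflTransGen G.pdStep b a := by
  intro hba
  obtain ⟨⟨-, -, hdir_irrefl, -, -⟩, hnoCycle⟩ := hG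
  obtain ⟨m, f, hf0, hfm, hstep, hinj⟩ := hba.exists_injective_walk
  have hm : m ≠ 0 := by
    rintro rfl
    rw [← hfm, hf0] at hab
    exact hdir_irrefl b hab
  -- `a → b` followed by a shortest walk from `b` back to `a` is a partially directed cycle
  refine hnoCycle ⟨m + 1, fun i => if i = 0 then a else f (i - 1), by omega, by simp [hfm], ?_, ?_,
    0, by omega, by simpa [hf0] using hab⟩
  · intro i j hi hj hij
    rcases i with _ | i <;> rcases j with _ | j <;> simp only [↓reduceIte, Nat.add_one_sub_one,
      Nat.add_eq_zero_iff, one_ne_zero, and_false] at hij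
    · rfl
    · have := hinj m j le_rfl (by omega) (hfm.trans hij); omega
    · have := hinj i m (by omega) le_rfl (hij.trans hfm.symm); omega
    · rw [hinj i j (by omega) (by omega) hij]
  · intro i hi
    rcases i with _ | i
    · simpa [hf0] using Or.inl hab
    · simpa [pdStep] using hstep i (by omega)

theorem IsMVR.eq_of_anc_of_pdReach (hG : G.IsMVR) (hab : G.anc a b)
    (hba : ReflTransGen G.pdStep b a) : a = b := by
  rcases ReflTransGen.cases_head hab with rfl | ⟨c, hac, hcb⟩
  · rfl
  · exact (hG.not_pdReach_of_dir hac
      ((ReflTransGen.mono (fun _ _ => Or.inl) _ _ hcb).trans hba)).elim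

theorem IsMixed.pdReach_of_mem_chainComp (hG : G.IsMixed) (hx : x ∈ G.chainComp v)
    (hy : y ∈ G.chainComp v) : ReflTransGen G.pdStep x y := by
  have : Std.Symm G.bi := ⟨hG.1⟩
  exact ReflTransGen.mono (fun _ _ => Or.inr) _ _ ((Std.Symm.symm _ _ hx).trans hy)


theorem subset_ancSet (S : Set V) : S ⊆ G.ancSet S := fun s hs => ⟨s, hs, ReflTransGen.refl⟩

theorem mem_disIn_self {A : Set V} : x ∈ G.disIn A x := ReflTransGen.refl

theorem chainComp_subset_disIn {A : Set V} (hA : G.chainComp v ⊆ A) :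
    G.chainComp v ⊆ G.disIn A v := by
  intro y hy
  change ReflTransGen G.bi v y at hy
  induction hy with
  | refl => exact mem_disIn_self
  | @tail c y hvc hcy ih => exact ih.tail ⟨hA hvc, hA (hvc.tail hcy), hcy⟩

theorem IsMVR.de_inter_chainComp (hG : G.IsMVR) (hx : x ∈ G.chainComp v) :
    G.de x ∩ G.chainComp v = {x} := by
  ext y
  refine ⟨fun ⟨hxy, hy⟩ => ?_, fun hy => ⟨hy ▸ ReflTransGen.refl, hy ▸ hx⟩⟩
  exact (hG.eq_of_anc_of_pdReach hxy (hG.1.pdReach_of_mem_chainComp hy hx)).symm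

theorem IsMVR.disIn_ancSet_chainComp_subset (hG : G.IsMVR) (hx : x ∈ G.chainComp v) :
    G.disIn (G.ancSet (G.chainComp v)) x ⊆ G.chainComp v := by
  intro z hz
  change ReflTransGen _ x z at hz
  induction hz with
  | refl => exact hx
  | @tail c z _ hcz hc =>
    obtain ⟨-, ⟨s, hs, hzs⟩, hcz⟩ := hcz
    rwa [hG.eq_of_anc_of_pdReach hzs ((hG.1.pdReach_of_mem_chainComp hs hc).tail (Or.inr hcz))]

theorem IsMVR.biUnion_disIn_ancSet_chainComp (hG : G.IsMVR) :
    ⋃ x ∈ G.chainComp v, G.disIn (G.ancSet (G.chainComp v)) x = G.chainComp v := by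
  refine subset_antisymm (Set.iUnion₂_subset fun x hx => ?_) fun x hx => ?_
  · exact hG.disIn_ancSet_chainComp_subset hx
  · exact Set.mem_biUnion hx mem_disIn_self

end MixedGraph

/-- In an MVR chain graph `G`, every chain component `T` forms a head
with tail equal to its parent set: (1) `T = barren(T)`, i.e. for every `x ∈ T`,
`de(x) ∩ T = {x}`; (2) `T` is contained in a single district of the induced subgraph of
`G` on `an(T)`; (3) `dis_{an(T)}(T) = T`, and consequently
`tail(T) = (dis_{an(T)}(T) \ T) ∪ pa_G(dis_{an(T)}(T)) = pa_G(T)`. -/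
theorem chain_component_head_tail {V : Type u} (G : MixedGraph V) (hG : G.IsMVR)
    (T : Set V) (hT : G.IsChainComp T) :
    (∀ x ∈ T, G.de x ∩ T = {x}) ∧
    (∃ x, T ⊆ G.disIn (G.ancSet T) x) ∧
    ((⋃ x ∈ T, G.disIn (G.ancSet T) x) = T ∧
      ((⋃ x ∈ T, G.disIn (G.ancSet T) x) \ T) ∪
        G.paSet (⋃ x ∈ T, G.disIn (G.ancSet T) x) = G.paSet T) := by
  obtain ⟨v, rfl⟩ := hT
  have hdis := hG.biUnion_disIn_ancSet_chainComp (v := v)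
  refine ⟨fun x hx => hG.de_inter_chainComp hx,
    ⟨v, MixedGraph.chainComp_subset_disIn (MixedGraph.subset_ancSet _)⟩, hdis, ?_⟩
  rw [hdis, Set.sdiff_self, Set.empty_union]
end

section
/- Let G be an MVR chain graph with vertex set V and chain components 𝒯, and let p be a strictly positive probability mass function on a finite product space ∏_{v ∈ V} S_v. If p obeys the global Markov property for G (for all pairwise disjoint X, Y, Z ⊆ V with X, Y nonempty, whenever X and Y are m-separated given Z in G, the coordinate tuples X_X and X_Y are conditionally independent given X_Z under p), then p factorizes over the chain components with their graphical parents: for every x ∈ ∏_{v∈V} S_v, p(x) = ∏_{T ∈ 𝒯} p_{T ∪ pa_G(T)}(x) / p_{pa_G(T)}(x), where p_A denotes the marginal of p on the coordinates in A. -/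
open scoped Classical

universe u

variable {V : Type u}

section Probability

variable {V : Type u} [Fintype V] [DecidableEq V] {S : V → Type} [∀ v, Fintype (S v)]

/-- The marginal of a pmf `p` on `∏ v, S v` over the coordinates in `A`, evaluated at the
configuration `x` : the sum of `p` over all configurations agreeing with `x` on `A`. -/
noncomputable def marginal (p : (∀ v, S v) → ℝ) (A : Set V) (x : ∀ v, S v) : ℝ :=
  ∑ y : ∀ v, S v, if ∀ v ∈ A, y v = x v then p y else 0

/-- Conditional independence of the coordinate tuples on `X` and on `Y` given those on
`Z`, under the pmf `p` : `p_{X∪Y∪Z}(x) · p_Z(x) = p_{X∪Z}(x) · p_{Y∪Z}(x)` for all `x`. -/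
def CondIndep (p : (∀ v, S v) → ℝ) (X Y Z : Set V) : Prop :=
  ∀ x : ∀ v, S v,
    marginal p (X ∪ Y ∪ Z) x * marginal p Z x = marginal p (X ∪ Z) x * marginal p (Y ∪ Z) x

end Probability

/-!
Call `U` PD-ancestral if every vertex from which a walk of forward `→` and `↔` edges reaches
`U` lies in `U`. By the absence of partially directed cycles, such a walk that leaves a chain
component never returns to it, so every nonempty PD-ancestral `U` contains a sink component `T`:
one that no such walk leaves inside `U`. A path from `T` to `U \ (T ∪ pa(T))` leaves `T` along a
directed edge; if it is m-connecting given `pa(T)` it must go on downwards, since a collider would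
be an ancestor of `pa(T)` and close a partially directed cycle, and so it cannot end in `U`. The
global Markov property therefore gives `p_U = p_{T ∪ pa(T)} / p_{pa(T)} · p_{U \ T}`, and
peeling off sink components from `U = V` down to `∅` yields the factorization.
-/

theorem Function.update_succ_chain {α : Type*} {r : α → α → Prop} {n : ℕ} {f : ℕ → α} {c : α}
    (hf : ∀ i < n, r (f i) (f (i + 1))) (hc : r (f n) c) :
    ∀ i < n + 1, r (Function.update f (n + 1) c i) (Function.update f (n + 1) c (i + 1)) := by
  intro i hi
  rw [Function.update_of_ne (by omega)]
  rcases Nat.lt_or_ge i n with hin | hin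
  · rw [Function.update_of_ne (by omega)]
    exact hf i hin
  · obtain rfl : i = n := by omega
    rwa [Function.update_self]

theorem Relation.ReflTransGen.exists_injective_walk_s14 {α : Type*} {r : α → α → Prop} {a b : α}
    (h : Relation.ReflTransGen r a b) :
    ∃ (n : ℕ) (f : ℕ → α), f 0 = a ∧ f n = b ∧ (∀ i < n, r (f i) (f (i + 1))) ∧
      ∀ i j, i ≤ n → j ≤ n → f i = f j → i = j := by
  induction h with
  | refl => exact ⟨0, fun _ => a, rfl, rfl, by simp, by omega⟩
  | @tail b c _ hbc ih =>
    obtain ⟨n, f, hf0, hfn, hstep, hinj⟩ := ih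
    by_cases hc : ∃ k ≤ n, f k = c
    · obtain ⟨k, hk, hfk⟩ := hc
      exact ⟨k, f, hf0, hfk, fun i hi => hstep i (by omega),
        fun i j hi hj => hinj i j (by omega) (by omega)⟩
    · push Not at hc
      refine ⟨n + 1, Function.update f (n + 1) c, by simpa using hf0, by simp,
        Function.update_succ_chain hstep (hfn ▸ hbc), fun i j hi hj hij => ?_⟩
      rcases Nat.lt_or_ge i (n + 1) with hi' | hi' <;>
        rcases Nat.lt_or_ge j (n + 1) with hj' | hj'
      · rw [Function.update_of_ne (by omega), Function.update_of_ne (by omega)] at hij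
        exact hinj i j (by omega) (by omega) hij
      · obtain rfl : j = n + 1 := by omega
        rw [Function.update_of_ne (by omega), Function.update_self] at hij
        exact absurd hij (hc i (by omega))
      · obtain rfl : i = n + 1 := by omega
        rw [Function.update_self, Function.update_of_ne (by omega)] at hij
        exact absurd hij.symm (hc j (by omega))
      · omega

section Probability

variable [Fintype V] [DecidableEq V] {S : V → Type} [∀ v, Fintype (S v)] {p : (∀ v, S v) → ℝ}

theorem marginal_pos (hpos : ∀ x, 0 < p x) (A : Set V) (x : ∀ v, S v) : 0 < marginal p A x :=
  Finset.sum_pos' (fun y _ => by split_ifs <;> simp [(hpos y).le])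
    ⟨x, Finset.mem_univ x, by simp [hpos x]⟩

theorem marginal_empty (x : ∀ v, S v) : marginal p ∅ x = ∑ y, p y := by
  simp [marginal]

theorem marginal_univ (x : ∀ v, S v) : marginal p Set.univ x = p x := by
  simp [marginal, ← funext_iff]

theorem CondIndep.marginal_union_eq {X Y Z : Set V} (h : CondIndep p X Y Z)
    (hpos : ∀ x, 0 < p x) (x : ∀ v, S v) :
    marginal p (X ∪ Y ∪ Z) x = marginal p (X ∪ Z) x / marginal p Z x * marginal p (Y ∪ Z) x := by
  have := (marginal_pos hpos Z x).ne'
  rw [div_mul_eq_mul_div, eq_div_iff this, h x]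

theorem GlobalMarkovM.condIndep {G : MixedGraph V}
    (h : GlobalMarkovM (fun X Y Z => CondIndep p X Y Z) G) {X Y Z : Set V} (hX : X.Nonempty)
    (hXY : Disjoint X Y) (hXZ : Disjoint X Z) (hYZ : Disjoint Y Z) (hsep : G.MSep X Y Z) :
    CondIndep p X Y Z := by
  rcases Y.eq_empty_or_nonempty with rfl | hY
  · intro x
    simp only [Set.union_empty, Set.empty_union]
  · exact h X Y Z hX hY hXY hXZ hYZ hsep

end Probability

namespace MixedGraph

variable {G : MixedGraph V}

def PDReachable (G : MixedGraph V) : V → V → Prop :=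
  Relation.ReflTransGen fun u v => G.dir u v ∨ G.bi u v

def IsPDAncestral (G : MixedGraph V) (U : Set V) : Prop :=
  ∀ ⦃u w⦄, G.PDReachable u w → w ∈ U → u ∈ U

theorem PDReachable.trans {u v w : V} (huv : G.PDReachable u v) (hvw : G.PDReachable v w) :
    G.PDReachable u w :=
  Relation.ReflTransGen.trans huv hvw

theorem pdReachable_of_biConn {u v : V} (h : G.biConn u v) : G.PDReachable u v :=
  Relation.ReflTransGen.mono (fun _ _ => Or.inr) u v h

theorem pdReachable_of_anc {u v : V} (h : G.anc u v) : G.PDReachable u v :=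
  Relation.ReflTransGen.mono (fun _ _ => Or.inl) u v h

theorem PDReachable.biConn_or_exists_dir {u w : V} (h : G.PDReachable u w) :
    G.biConn u w ∨ ∃ a b, G.dir a b ∧ G.PDReachable u a ∧ G.PDReachable b w := by
  induction h with
  | refl => exact Or.inl .refl
  | @tail c e hc hce ih =>
    rcases hce with hdir | hbi
    · exact Or.inr ⟨c, e, hdir, hc, .refl⟩
    · rcases ih with hb | ⟨a, b, hdir, hua, hbc⟩
      · exact Or.inl (hb.tail hbi)
      · exact Or.inr ⟨a, b, hdir, hua, hbc.tail (Or.inr hbi)⟩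

theorem IsMVR.not_pdReachable_of_dir (hG : G.IsMVR) {a b : V} (hab : G.dir a b) :
    ¬ G.PDReachable b a := by
  intro hba
  obtain ⟨n, f, hf0, hfn, hstep, hinj⟩ := Relation.ReflTransGen.exists_injective_walk_s14 hba
  have hn : n ≠ 0 := by
    rintro rfl
    obtain rfl : a = b := hfn.symm.trans hf0
    exact hG.1.2.2.1 a hab
  refine hG.2 ⟨n + 1, Function.update f (n + 1) b, by omega, by simp [hf0],
    fun i j hi hj hij => ?_,
    Function.update_succ_chain (r := fun u v => G.dir u v ∨ G.bi u v) hstep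
      (by rw [hfn]; exact Or.inl hab), n, by omega, ?_⟩
  · rw [Function.update_of_ne (by omega), Function.update_of_ne (by omega)] at hij
    exact hinj i j (by omega) (by omega) hij
  · rwa [Function.update_of_ne (by omega), Function.update_self, hfn]

theorem biConn_symm (hbi : ∀ u v, G.bi u v → G.bi v u) {u v : V} (h : G.biConn u v) :
    G.biConn v u :=
  Relation.ReflTransGen.mono (fun a b hab => hbi b a hab) v u (Relation.ReflTransGen.swap v u h)

theorem mem_chainComp_self (v : V) : v ∈ G.chainComp v :=
  Relation.ReflTransGen.refl

theorem biConn_of_mem_chainComp (hbi : ∀ u v, G.bi u v → G.bi v u) {t u w : V}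
    (hu : u ∈ G.chainComp t) (hw : w ∈ G.chainComp t) : G.biConn u w :=
  (biConn_symm hbi hu).trans hw

theorem chainComp_eq_of_mem (hbi : ∀ u v, G.bi u v → G.bi v u) {t u : V}
    (hu : u ∈ G.chainComp t) : G.chainComp u = G.chainComp t := by
  ext w
  exact ⟨fun hw => hu.trans hw, fun hw => (biConn_symm hbi hu).trans hw⟩

theorem IsMVR.mem_chainComp_of_pdReachable (hG : G.IsMVR) {t u w : V} (hu : u ∈ G.chainComp t)
    (huw : G.PDReachable u w) (hwt : G.PDReachable w t) : w ∈ G.chainComp t := by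
  rcases huw.biConn_or_exists_dir with hbi | ⟨a, b, hab, hua, hbw⟩
  · exact hu.trans hbi
  · exact absurd (hbw.trans (hwt.trans ((pdReachable_of_biConn hu).trans hua)))
      (hG.not_pdReachable_of_dir hab)

theorem IsWalk.pdReachable_of_dir {n i : ℕ} {f : ℕ → V} (hf : G.IsWalk n f) (hin : i ≤ n)
    (hd : G.dir (f (i - 1)) (f i))
    (hnc : ∀ k, i ≤ k → k < n → G.PDReachable (f i) (f k) → ¬ G.IsColliderAt f k) :
    G.PDReachable (f i) (f n) := by
  suffices h : ∀ k, i ≤ k → k ≤ n → G.dir (f (k - 1)) (f k) ∧ G.PDReachable (f i) (f k) from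
    (h n hin le_rfl).2
  intro k hik
  induction k, hik using Nat.le_induction with
  | base => exact fun _ => ⟨hd, .refl⟩
  | succ k hik ih =>
    intro hkn
    obtain ⟨hdk, hreach⟩ := ih (by omega)
    have hnc := hnc k hik (by omega) hreach
    rcases hf k (by omega) with h | h | h
    · exact ⟨by simpa using h, hreach.tail (Or.inl h)⟩
    · exact absurd ⟨Or.inl hdk, Or.inl h⟩ hnc
    · exact absurd ⟨Or.inl hdk, Or.inr h⟩ hnc

theorem IsMVR.mSep_chainComp_paSet (hG : G.IsMVR) (t : V) {Y : Set V}
    (hY : ∀ u ∈ G.chainComp t, ∀ y ∈ Y, ¬ G.PDReachable u y)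
    (hYpa : Disjoint Y (G.paSet (G.chainComp t))) :
    G.MSep (G.chainComp t) Y (G.paSet (G.chainComp t)) := by
  set T := G.chainComp t
  rintro α hα β hβ ⟨n, f, ⟨hwalk, -⟩, hf0, hfn, hmc⟩
  have hexit : ∃ i, f i ∉ T := ⟨n, fun h => hY _ h β hβ (hfn ▸ .refl)⟩
  set i := Nat.find hexit
  have hiT : f i ∉ T := Nat.find_spec hexit
  have hin : i ≤ n := Nat.find_min' hexit fun h => hY _ h β hβ (hfn ▸ .refl)
  have hi0 : i ≠ 0 := fun h => hiT (by rwa [h, hf0])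
  have hprev : f (i - 1) ∈ T := not_not.1 (Nat.find_min hexit (by omega))
  have hedge := hwalk (i - 1) (by omega)
  rw [Nat.sub_add_cancel (by omega)] at hedge
  rcases hedge with hout | hinc | hbi
  · refine hY _ hprev β hβ (hfn ▸ .head (Or.inl hout) (hwalk.pdReachable_of_dir hin hout ?_))
    intro k hik hkn hreach hcol
    obtain ⟨z, ⟨-, s, hs, hzs⟩, hz⟩ := (hmc k (by omega) hkn).1 hcol
    -- a collider is an ancestor of `pa(T)`, which closes a partially directed cycle
    refine hG.not_pdReachable_of_dir hout (hreach.trans ((pdReachable_of_anc hz).trans ?_))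
    exact Relation.ReflTransGen.head (Or.inl hzs)
      (pdReachable_of_biConn (biConn_of_mem_chainComp hG.1.1 hs hprev))
  · have hpa : f i ∈ G.paSet T := ⟨hiT, _, hprev, hinc⟩
    rcases hin.lt_or_eq with hlt | heq
    · refine (hmc i (by omega) hlt).2 ?_ hpa
      rintro ⟨h | h, -⟩
      · exact hG.1.2.2.2.2 _ _ hinc h
      · exact hiT (hprev.tail h)
    · exact Set.disjoint_left.1 hYpa hβ (by rwa [← hfn, ← heq])
  · exact hiT (hprev.tail hbi)

theorem IsMVR.exists_sink_chainComp [Finite V] (hG : G.IsMVR) {U : Set V} (hU : U.Nonempty) :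
    ∃ t ∈ U, ∀ u ∈ G.chainComp t, ∀ w ∈ U, G.PDReachable u w → w ∈ G.chainComp t := by
  obtain ⟨t, ht, hmin⟩ :=
    Set.Finite.exists_minimalFor (fun t => {w | G.PDReachable t w}) U (Set.toFinite U) hU
  refine ⟨t, ht, fun u hu w hw huw => hG.mem_chainComp_of_pdReachable hu huw ?_⟩
  have htw : G.PDReachable t w := (pdReachable_of_biConn hu).trans huw
  exact hmin hw (fun v hwv => htw.trans hwv) (Relation.ReflTransGen.refl : G.PDReachable t t)

theorem IsPDAncestral.chainComp_subset (hbi : ∀ u v, G.bi u v → G.bi v u) {U : Set V}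
    (hU : G.IsPDAncestral U) {t : V} (ht : t ∈ U) : G.chainComp t ⊆ U :=
  fun _ hu => hU (pdReachable_of_biConn (biConn_symm hbi hu)) ht

theorem IsPDAncestral.paSet_subset {U T : Set V} (hU : G.IsPDAncestral U) (hT : T ⊆ U) :
    G.paSet T ⊆ U \ T :=
  fun _ ⟨hzT, _, hs, hzs⟩ => ⟨hU (Relation.ReflTransGen.single (Or.inl hzs)) (hT hs), hzT⟩

theorem IsPDAncestral.diff {U T : Set V} (hU : G.IsPDAncestral U)
    (hT : ∀ u ∈ T, ∀ w ∈ U, G.PDReachable u w → w ∈ T) : G.IsPDAncestral (U \ T) :=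
  fun _ _ huw ⟨hwU, hwT⟩ => ⟨hU huw hwU, fun huT => hwT (hT _ huT _ hwU huw)⟩

noncomputable def chainComps [Fintype V] (G : MixedGraph V) : Finset (Set V) :=
  Finset.univ.image G.chainComp

theorem mem_chainComps [Fintype V] (v : V) : G.chainComp v ∈ G.chainComps :=
  Finset.mem_image_of_mem _ (Finset.mem_univ v)

theorem filter_chainComps_subset_diff [Fintype V] (hbi : ∀ u v, G.bi u v → G.bi v u) (U : Set V)
    (t : V) : G.chainComps.filter (· ⊆ U \ G.chainComp t) =
      (G.chainComps.filter (· ⊆ U)).erase (G.chainComp t) := by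
  ext T
  simp only [chainComps, Finset.mem_filter, Finset.mem_erase, Finset.mem_image, Finset.mem_univ,
    true_and, Set.subset_sdiff]
  constructor
  · rintro ⟨⟨w, rfl⟩, hwU, hdisj⟩
    exact ⟨fun h => hdisj.ne_of_mem (mem_chainComp_self w) (h ▸ mem_chainComp_self w) rfl,
      ⟨w, rfl⟩, hwU⟩
  · rintro ⟨hne, ⟨w, rfl⟩, hwU⟩
    refine ⟨⟨w, rfl⟩, hwU, Set.disjoint_left.2 fun y hyw hyt => hne ?_⟩
    rw [← chainComp_eq_of_mem hbi hyw, chainComp_eq_of_mem hbi hyt]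

section Factorization

variable [Fintype V] [DecidableEq V] {S : V → Type} [∀ v, Fintype (S v)] {p : (∀ v, S v) → ℝ}

theorem IsMVR.marginal_eq_prod_of_isPDAncestral (hG : G.IsMVR) (hpos : ∀ x, 0 < p x)
    (hsum : ∑ x, p x = 1) (hglobal : GlobalMarkovM (fun X Y Z => CondIndep p X Y Z) G)
    (U : Set V) (hU : G.IsPDAncestral U) (x : ∀ v, S v) :
    marginal p U x = ∏ T ∈ G.chainComps.filter (· ⊆ U),
      marginal p (T ∪ G.paSet T) x / marginal p (G.paSet T) x := by
  induction U using WellFoundedLT.induction with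
  | _ U ih =>
    rcases U.eq_empty_or_nonempty with rfl | hne
    · rw [marginal_empty, hsum, Finset.filter_false_of_mem, Finset.prod_empty]
      intro T hT hT0
      obtain ⟨w, -, rfl⟩ := Finset.mem_image.1 hT
      exact hT0 (mem_chainComp_self w)
    obtain ⟨t, htU, hsink⟩ := hG.exists_sink_chainComp hne
    set T := G.chainComp t
    have hTU : T ⊆ U := hU.chainComp_subset hG.1.1 htU
    have hpaT : G.paSet T ⊆ U \ T := hU.paSet_subset hTU
    have hsep : G.MSep T ((U \ T) \ G.paSet T) (G.paSet T) :=
      hG.mSep_chainComp_paSet t (fun u hu y hy huy => hy.1.2 (hsink u hu y hy.1.1 huy))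
        Set.disjoint_sdiff_left
    have hCI : CondIndep p T ((U \ T) \ G.paSet T) (G.paSet T) :=
      hglobal.condIndep ⟨t, mem_chainComp_self t⟩
        (Set.disjoint_sdiff_right.mono_right Set.sdiff_subset)
        (Set.disjoint_left.2 fun _ hu hz => hz.1 hu) Set.disjoint_sdiff_left hsep
    have hsplit := hCI.marginal_union_eq hpos x
    rw [Set.union_assoc, Set.sdiff_union_of_subset hpaT, Set.union_sdiff_cancel hTU] at hsplit
    rw [hsplit, ih (U \ T) (hTU.sdiff_ssubset_of_nonempty ⟨t, mem_chainComp_self t⟩)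
      (hU.diff fun u hu w hw => hsink u hu w hw), filter_chainComps_subset_diff hG.1.1]
    exact Finset.mul_prod_erase _
      (fun T => marginal p (T ∪ G.paSet T) x / marginal p (G.paSet T) x)
      (Finset.mem_filter.2 ⟨mem_chainComps t, hTU⟩)

end Factorization

end MixedGraph

theorem factorization_over_chain_components_general {V : Type u} [Fintype V] [DecidableEq V]
    (G : MixedGraph V) (hG : G.IsMVR)
    (S : V → Type) [∀ v, Fintype (S v)]
    (p : (∀ v, S v) → ℝ) (hpos : ∀ x, 0 < p x) (hsum : ∑ x : ∀ v, S v, p x = 1)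
    (hglobal : GlobalMarkovM (fun X Y Z => CondIndep p X Y Z) G) :
    ∀ x : ∀ v, S v,
      p x = ∏ T ∈ Finset.univ.image (fun v => G.chainComp v),
        marginal p (T ∪ G.paSet T) x / marginal p (G.paSet T) x := by
  intro x
  have h := hG.marginal_eq_prod_of_isPDAncestral hpos hsum hglobal Set.univ
    (fun _ _ _ _ => trivial) x
  rwa [marginal_univ, Finset.filter_true_of_mem fun T _ => Set.subset_univ T] at h

/-- Let `G` be an MVR chain graph on a finite vertex set `V` and `p` a
strictly positive pmf on the finite product space `∏ v, S v`. If `p` obeys the global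
Markov property for `G` (m-separation implies conditional independence), then `p`
factorizes over the chain components with their graphical parents:
`p(x) = ∏_{T ∈ 𝒯} p_{T ∪ pa_G(T)}(x) / p_{pa_G(T)}(x)`. -/
theorem factorization_over_chain_components {V : Type u} [Fintype V] [DecidableEq V]
    (G : MixedGraph V) (hG : G.IsMVR)
    (S : V → Type) [∀ v, Fintype (S v)] [∀ v, Nonempty (S v)]
    (p : (∀ v, S v) → ℝ) (hpos : ∀ x, 0 < p x) (hsum : ∑ x : ∀ v, S v, p x = 1)
    (hglobal : GlobalMarkovM (fun X Y Z => CondIndep p X Y Z) G) :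
    ∀ x : ∀ v, S v,
      p x = ∏ T ∈ Finset.univ.image (fun v => G.chainComp v),
        marginal p (T ∪ G.paSet T) x / marginal p (G.paSet T) x :=
  factorization_over_chain_components_general G hG S p hpos hsum hglobal
end
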